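/- arXiv:2007.06981 — 8 statements merged into one kernel-verified Lean document; each statement's English description precedes it below -/
import Mathlib

section
/- Any quadratic form x² + xy + ay² with 0 ≠ a ∈ 𝔽_{2^k}(t) is equivalent, via a transformation of the variable x of the form x ↦ x + g·y with g ∈ 𝔽_{2^k}(t), to a form x² + xy + a′y² in which every pole of a′ (including the pole at infinity, i.e., positive degree) has odd multiplicity. -/
/-!
In characteristic 2 the map `g ↦ g + g²` is additive, so shifts `a ↦ a + g + g²` compose and
it suffices to lower a suitable measure of `a` one step at a time.

If `π` divides the denominator of `a = p / (π^(2n) r)` exactly `2n ≥ 2` times, the residue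
field `K[X]/(π)` is perfect, so there is `c` with `c² r ≡ p (mod π)`. Then `g = c / πⁿ`
gives `a + g + g² = (p + (c πⁿ + c²) r) / (π^(2n) r)` with `π` dividing the numerator, and
the denominator drops in degree. If `a` has positive even degree `2m`, the polynomial `g = s Xᵐ`
with `s²` the leading coefficient of the numerator cancels the leading term and lowers the
degree, while adding a polynomial leaves the denominator unchanged.
-/

open Polynomial

theorem exists_sq_eq_of_perfectField {K : Type*} [Field K] [PerfectField K] [CharP K 2]
    (x : K) : ∃ y, y ^ 2 = x :=
  surjective_frobenius K 2 x

theorem CharTwo.add_add_sq_add {R : Type*} [CommRing R] [CharP R 2] (a g h : R) :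
    a + (g + h) + (g + h) ^ 2 = (a + g + g ^ 2) + h + h ^ 2 := by
  linear_combination (g * h) * CharTwo.two_eq_zero (R := R)

theorem CharTwo.exists_add_add_sq_of_descent {R : Type*} [CommRing R] [CharP R 2]
    (S : AddSubmonoid R) {P : R → Prop} (μ : R → ℕ)
    (hstep : ∀ a, ¬ P a → ∃ g ∈ S, μ (a + g + g ^ 2) < μ a) (a : R) :
    ∃ g ∈ S, P (a + g + g ^ 2) := by
  induction a using (measure μ).wf.induction with
  | _ a ih =>
    by_cases ha : P a
    · exact ⟨0, S.zero_mem, by simpa using ha⟩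
    obtain ⟨g, hgS, hlt⟩ := hstep a ha
    obtain ⟨h, hhS, hP⟩ := ih _ hlt
    exact ⟨g + h, S.add_mem hgS hhS, by rwa [CharTwo.add_add_sq_add]⟩

theorem Polynomial.exists_dvd_sq_mul_add {K : Type*} [Field K] [PerfectField K] [CharP K 2]
    {π : K[X]} (hπ : Irreducible π) {r : K[X]} (hr : ¬ π ∣ r) (p : K[X]) :
    ∃ c, π ∣ c ^ 2 * r + p := by
  have : Fact (Irreducible π) := ⟨hπ⟩
  have : Module.Finite K (AdjoinRoot π) := (AdjoinRoot.powerBasis hπ.ne_zero).finite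
  have : PerfectField (AdjoinRoot π) := Algebra.IsAlgebraic.perfectField K
  have : CharP (AdjoinRoot π) 2 := charP_of_injective_algebraMap' K 2
  have hr' : AdjoinRoot.mk π r ≠ 0 := by rwa [Ne, AdjoinRoot.mk_eq_zero]
  obtain ⟨v, hv⟩ := exists_sq_eq_of_perfectField (AdjoinRoot.mk π p / AdjoinRoot.mk π r)
  obtain ⟨c, rfl⟩ := AdjoinRoot.mk_surjective v
  refine ⟨c, ?_⟩
  rw [← AdjoinRoot.mk_eq_zero, map_add, map_mul, map_pow, hv, div_mul_cancel₀ _ hr',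
    CharTwo.add_self_eq_zero]

theorem Polynomial.exists_degree_add_add_sq_mul_lt {K : Type*} [Field K] [PerfectField K]
    [CharP K 2] {p q : K[X]} (hq : q.Monic) {m : ℕ} (hm : 0 < m)
    (hdeg : p.natDegree = q.natDegree + 2 * m) :
    ∃ c, (p + (c + c ^ 2) * q).degree < p.degree := by
  have hp : p ≠ 0 := by rintro rfl; simp at hdeg; omega
  obtain ⟨s, hs⟩ := exists_sq_eq_of_perfectField p.leadingCoeff
  have hs0 : s ≠ 0 := by
    rintro rfl
    exact hp (leadingCoeff_eq_zero.mp (by rw [← hs, zero_pow two_ne_zero]))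
  set c := C s * X ^ m
  have hc2 : c ^ 2 = C p.leadingCoeff * X ^ (2 * m) := by
    rw [mul_pow, ← C_pow, hs, ← pow_mul, mul_comm m 2]
  have hsq : (p + c ^ 2 * q).degree < p.degree := by
    rw [← CharTwo.sub_eq_add]
    refine degree_sub_lt_left (Eq.symm ?_) hp (Eq.symm ?_)
    · rw [hc2, mul_assoc, degree_C_mul (leadingCoeff_ne_zero.mpr hp), degree_mul, degree_X_pow,
        degree_eq_natDegree hp, degree_eq_natDegree hq.ne_zero, hdeg]
      push_cast
      ring
    · rw [hc2, leadingCoeff_mul, leadingCoeff_C_mul_X_pow, hq.leadingCoeff, mul_one]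
  have hlin : (c * q).degree < p.degree := by
    rw [mul_assoc, degree_C_mul hs0, degree_mul, degree_X_pow, degree_eq_natDegree hq.ne_zero,
      degree_eq_natDegree hp, hdeg]
    exact_mod_cast by omega
  refine ⟨c, ?_⟩
  calc (p + (c + c ^ 2) * q).degree = ((p + c ^ 2 * q) + c * q).degree := by ring_nf
    _ ≤ max (p + c ^ 2 * q).degree (c * q).degree := degree_add_le _ _
    _ < p.degree := max_lt hsq hlin

theorem div_add_div_add_div_sq {L : Type*} [Field L] (p c : L) {t r : L} (ht : t ≠ 0)
    (hr : r ≠ 0) :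
    p / (t ^ 2 * r) + c / t + (c / t) ^ 2 = (p + (c * t + c ^ 2) * r) / (t ^ 2 * r) := by
  field_simp
  ring

namespace RatFunc

variable {K : Type*} [Field K]

def HasOddFinitePoles (x : RatFunc K) : Prop :=
  ∀ π : K[X], Irreducible π → ∀ n : ℕ,
    π ^ (2 * n) ∣ x.denom → ¬ π ^ (2 * n + 1) ∣ x.denom → n = 0

def HasOddPoleAtInfinity (x : RatFunc K) : Prop :=
  0 < x.intDegree → Odd x.intDegree

theorem natDegree_denom_div_lt {p q d : K[X]} (hq : q ≠ 0) (hd : ¬ IsUnit d) (hdp : d ∣ p)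
    (hdq : d ∣ q) :
    (algebraMap K[X] (RatFunc K) p / algebraMap K[X] (RatFunc K) q).denom.natDegree
      < q.natDegree := by
  obtain ⟨p', rfl⟩ := hdp
  obtain ⟨q', rfl⟩ := hdq
  have hd0 : d ≠ 0 := left_ne_zero_of_mul hq
  have hq' : q' ≠ 0 := right_ne_zero_of_mul hq
  have hcancel : algebraMap K[X] (RatFunc K) (d * p') / algebraMap K[X] (RatFunc K) (d * q')
      = algebraMap K[X] (RatFunc K) p' / algebraMap K[X] (RatFunc K) q' := by
    rw [map_mul, map_mul, mul_div_mul_left _ _ (RatFunc.algebraMap_ne_zero hd0)]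
  calc _ ≤ q'.natDegree := by
          rw [hcancel]; exact natDegree_le_of_dvd (denom_div_dvd p' q') hq'
    _ < d.natDegree + q'.natDegree := by
          have := natDegree_pos_iff_degree_pos.mpr (degree_pos_of_ne_zero_of_nonunit hd0 hd)
          omega
    _ = (d * q').natDegree := (natDegree_mul hd0 hq').symm

theorem denom_add_algebraMap (x : RatFunc K) (d : K[X]) :
    (x + algebraMap K[X] (RatFunc K) d).denom = x.denom := by
  refine eq_of_monic_of_associated (monic_denom _) (monic_denom _) (associated_of_dvd_dvd ?_ ?_)
  · simpa [denom_algebraMap] using denom_add_dvd x (algebraMap K[X] (RatFunc K) d)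
  · have h :=
      denom_add_dvd (x + algebraMap K[X] (RatFunc K) d) (algebraMap K[X] (RatFunc K) (-d))
    rwa [denom_algebraMap, mul_one, map_neg, add_neg_cancel_right] at h

variable [PerfectField K] [CharP K 2]

theorem exists_natDegree_denom_add_add_sq_lt {a : RatFunc K} (ha : ¬ a.HasOddFinitePoles) :
    ∃ g, (a + g + g ^ 2).denom.natDegree < a.denom.natDegree := by
  simp only [HasOddFinitePoles, not_forall] at ha
  obtain ⟨π, hπ, n, ⟨r, hq⟩, hnot, hn⟩ := ha
  obtain ⟨m, rfl⟩ : ∃ m, n = m + 1 := ⟨n - 1, by omega⟩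
  have hπr : ¬ π ∣ r := fun ⟨s, hs⟩ => hnot ⟨s, by rw [hq, hs]; ring⟩
  obtain ⟨c, hc⟩ := exists_dvd_sq_mul_add hπ hπr a.num
  set φ := algebraMap K[X] (RatFunc K)
  have hr : φ r ≠ 0 := algebraMap_ne_zero fun h => a.denom_ne_zero (by rw [hq, h, mul_zero])
  have hπ0 : φ π ≠ 0 := algebraMap_ne_zero hπ.ne_zero
  refine ⟨φ c / φ π ^ (m + 1), ?_⟩
  have hval : a + φ c / φ π ^ (m + 1) + (φ c / φ π ^ (m + 1)) ^ 2
      = φ (a.num + (c * π ^ (m + 1) + c ^ 2) * r) / φ a.denom := by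
    have hden : φ a.denom = (φ π ^ (m + 1)) ^ 2 * φ r := by
      rw [hq, map_mul, map_pow, ← pow_mul, mul_comm 2]
    nth_rw 1 [← num_div_denom a]
    rw [hden, div_add_div_add_div_sq _ _ (pow_ne_zero _ hπ0) hr]
    simp only [φ, map_add, map_mul, map_pow]
  have hnum : π ∣ a.num + (c * π ^ (m + 1) + c ^ 2) * r := by
    convert dvd_add hc (dvd_mul_right π (c * π ^ m * r)) using 1
    ring
  rw [hval]
  exact natDegree_denom_div_lt a.denom_ne_zero hπ.not_isUnit hnum
    ((dvd_pow_self π (by omega)).trans ⟨r, hq⟩)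

theorem exists_intDegree_add_add_sq_lt {b : RatFunc K} (hpos : 0 < b.intDegree)
    (heven : Even b.intDegree) :
    ∃ c : K[X], (b + algebraMap K[X] (RatFunc K) c + algebraMap K[X] (RatFunc K) c ^ 2).intDegree
      < b.intDegree := by
  obtain ⟨k, hk⟩ := heven
  have hdeg : b.intDegree = (b.num.natDegree : ℤ) - b.denom.natDegree := rfl
  obtain ⟨c, hc⟩ := Polynomial.exists_degree_add_add_sq_mul_lt (p := b.num) (monic_denom b)
    (m := k.toNat) (by omega) (by omega)
  set φ := algebraMap K[X] (RatFunc K)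
  refine ⟨c, ?_⟩
  have hval : b + φ c + φ c ^ 2 = φ (b.num + (c + c ^ 2) * b.denom) / φ b.denom := by
    rw [map_add, add_div, map_mul, mul_div_cancel_right₀ _ (algebraMap_ne_zero b.denom_ne_zero),
      num_div_denom, map_add, map_pow, add_assoc]
  rw [hval]
  rcases eq_or_ne (b.num + (c + c ^ 2) * b.denom) 0 with h0 | h0
  · simpa [h0] using hpos
  rw [intDegree_div (algebraMap_ne_zero h0) (algebraMap_ne_zero b.denom_ne_zero),
    intDegree_polynomial, intDegree_polynomial, hdeg]
  have := natDegree_lt_natDegree h0 hc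
  omega

theorem exists_add_add_sq_hasOddFinitePoles (a : RatFunc K) :
    ∃ g, (a + g + g ^ 2).HasOddFinitePoles := by
  obtain ⟨g, -, hg⟩ :=
    CharTwo.exists_add_add_sq_of_descent ⊤ (fun x : RatFunc K => x.denom.natDegree)
    (fun x hx => (exists_natDegree_denom_add_add_sq_lt hx).imp fun g hg => ⟨trivial, hg⟩) a
  exact ⟨g, hg⟩

theorem exists_add_add_sq_algebraMap_hasOddPoleAtInfinity (b : RatFunc K) :
    ∃ c : K[X], (b + algebraMap K[X] (RatFunc K) c
      + algebraMap K[X] (RatFunc K) c ^ 2).HasOddPoleAtInfinity := by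
  obtain ⟨_, ⟨c, rfl⟩, hc⟩ := CharTwo.exists_add_add_sq_of_descent
    (P := HasOddPoleAtInfinity) (algebraMap K[X] (RatFunc K)).rangeS.toAddSubmonoid
    (fun x : RatFunc K => x.intDegree.toNat)
    (fun x hx => by
      simp only [HasOddPoleAtInfinity, Classical.not_imp, Int.not_odd_iff_even] at hx
      obtain ⟨c, hc⟩ := exists_intDegree_add_add_sq_lt hx.1 hx.2
      exact ⟨_, ⟨c, rfl⟩, by omega⟩) b
  exact ⟨c, hc⟩

end RatFunc

theorem stmt9_general (F : Type*) [Field F] [Fintype F] [CharP F 2]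
    (a : RatFunc F) :
    ∃ g : RatFunc F,
      (∀ π : F[X], Irreducible π → ∀ n : ℕ,
        π^(2*n) ∣ (a + g + g^2).denom → ¬ π^(2*n+1) ∣ (a + g + g^2).denom → n = 0) ∧
      (0 < (a + g + g^2).intDegree → Odd (a + g + g^2).intDegree) := by
  obtain ⟨g, hg⟩ := RatFunc.exists_add_add_sq_hasOddFinitePoles a
  obtain ⟨c, hc⟩ := RatFunc.exists_add_add_sq_algebraMap_hasOddPoleAtInfinity (a + g + g ^ 2)
  refine ⟨g + algebraMap F[X] (RatFunc F) c, ?_, ?_⟩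
  · rw [CharTwo.add_add_sq_add, add_assoc _ (algebraMap _ _ c), ← map_pow, ← map_add,
      RatFunc.denom_add_algebraMap]
    exact hg
  · rw [CharTwo.add_add_sq_add]
    exact hc

/-- Every form `x² + xy + ay²` over `𝔽_{2^k}(t)` is equivalent, via `x ↦ x + gy`
(which replaces `a` by `a' = a + g + g²`), to a minimal form: every finite pole of `a'`
has odd multiplicity, and if `a'` has positive degree then its degree is odd. -/
theorem stmt9 (F : Type*) [Field F] [Fintype F] [CharP F 2]
    (a : RatFunc F) (ha : a ≠ 0) :
    ∃ g : RatFunc F,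
      (∀ π : F[X], Irreducible π → ∀ n : ℕ,
        π^(2*n) ∣ (a + g + g^2).denom → ¬ π^(2*n+1) ∣ (a + g + g^2).denom → n = 0) ∧
      (0 < (a + g + g^2).intDegree → Odd (a + g + g^2).intDegree) :=
  stmt9_general F a
end

section
/- Let F be a complete discretely valued field of characteristic 2 with finite residue field, valuation v and valuation ring O, and let a ∈ O. If c ∈ F× has even valuation v(c), then the equation x² + xy + ay² = c has a solution x, y ∈ F. -/
/-!
The form `x² + xy + ay²` is the norm form of `K[X]/(X² + X + a)`. If `X² + X + a` has a root `t`,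
it factors as `(x + ty)(x + (t + 1)y)` and represents every element. Otherwise `a` is a unit; since
the residue field is finite of characteristic 2, `a / u` is a square `v²` modulo the maximal ideal,
so `X² + X + a + uv²` has the simple root `0` there, and Hensel's lemma lifts it to a root `z` in
`O`, i.e. `z² + z + a = uv²`. Hence the form represents `u`, and scaling by `π ^ n` gives `u π^(2n)`.
-/

open IsLocalRing Polynomial

theorem exists_sq_add_mul_add_mul_sq_eq_of_sq_add_self_add_eq_zero {R : Type*} [CommRing R]
    [CharP R 2] {a t : R} (ht : t ^ 2 + t + a = 0) (c : R) :
    ∃ x y : R, x ^ 2 + x * y + a * y ^ 2 = c :=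
  ⟨c + t * (c + 1), c + 1, by
    linear_combination (c + 1) ^ 2 * ht + (c ^ 2 + c * t * (c + 1)) * CharTwo.two_eq_zero (R := R)⟩

section CharTwoLocalRing

variable {O : Type*} [CommRing O] [IsLocalRing O] [CharP O 2]

theorem exists_sq_add_self_add_eq_zero [HenselianRing O (maximalIdeal O)] {b r : O}
    (hr : r ^ 2 + r + b ∈ maximalIdeal O) : ∃ z : O, z ^ 2 + z + b = 0 := by
  have hmonic : (X ^ 2 + X + C b : O[X]).Monic := by monicity!
  have hder : (derivative (X ^ 2 + X + C b)).eval r = 1 := by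
    simp [one_add_one_eq_two, CharTwo.two_eq_zero]
  obtain ⟨z, hz, -⟩ := HenselianRing.is_henselian _ hmonic r
    (by simpa only [eval_add, eval_pow, eval_X, eval_C] using hr)
    (by rw [hder, map_one]; exact isUnit_one)
  exact ⟨z, by simpa using hz⟩

theorem exists_isUnit_add_mul_sq_mem_maximalIdeal [Finite (ResidueField O)] {a u : O}
    (ha : IsUnit a) (hu : IsUnit u) : ∃ v : O, IsUnit v ∧ a + u * v ^ 2 ∈ maximalIdeal O := by
  have : CharP (ResidueField O) 2 := CharTwo.of_one_ne_zero_of_two_eq_zero one_ne_zero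
    (by rw [← map_ofNat (residue O) 2, CharTwo.two_eq_zero, map_zero])
  have hu' : residue O u ≠ 0 := (residue_ne_zero_iff_isUnit u).mpr hu
  obtain ⟨w, hw⟩ := isSquare_of_charTwo' (residue O a / residue O u)
  obtain ⟨v, rfl⟩ := residue_surjective w
  refine ⟨v, (residue_ne_zero_iff_isUnit v).mp ?_, (residue_eq_zero_iff _).mp ?_⟩
  · rintro hv
    rw [hv, mul_zero, div_eq_zero_iff] at hw
    exact hw.elim ((residue_ne_zero_iff_isUnit a).mpr ha) hu'
  · rw [map_add, map_mul, map_pow, sq, ← hw, mul_div_cancel₀ _ hu']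
    exact CharTwo.add_self_eq_zero _

theorem exists_sq_add_self_add_eq_mul_sq [HenselianRing O (maximalIdeal O)]
    [Finite (ResidueField O)] {a u : O} (ha : IsUnit a) (hu : IsUnit u) :
    ∃ z v : O, IsUnit v ∧ z ^ 2 + z + a = u * v ^ 2 := by
  obtain ⟨v, hv, hm⟩ := exists_isUnit_add_mul_sq_mem_maximalIdeal ha hu
  obtain ⟨z, hz⟩ := exists_sq_add_self_add_eq_zero (r := 0) (b := a + u * v ^ 2) (by simpa using hm)
  exact ⟨z, v, hv, by linear_combination hz - u * v ^ 2 * CharTwo.two_eq_zero (R := O)⟩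

end CharTwoLocalRing

theorem stmt10_general (O : Type*) [CommRing O] [IsDomain O] [IsDiscreteValuationRing O]
    [IsAdicComplete (IsLocalRing.maximalIdeal O) O]
    [Finite (IsLocalRing.ResidueField O)]
    (K : Type*) [Field K] [Algebra O K] [IsFractionRing O K] [CharP K 2]
    (π : O) (a : O) (c : K)
    (heven : ∃ (u : Oˣ) (n : ℤ), c = algebraMap O K u * (algebraMap O K π)^(2*n)) :
    ∃ x y : K, x^2 + x*y + algebraMap O K a * y^2 = c := by
  have : CharP O 2 := CharTwo.of_one_ne_zero_of_two_eq_zero one_ne_zero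
    (IsFractionRing.injective O K (by rw [map_ofNat, map_zero, CharTwo.two_eq_zero]))
  obtain ⟨u, n, rfl⟩ := heven
  by_cases hroot : ∃ r : O, r ^ 2 + r + a ∈ maximalIdeal O
  · obtain ⟨r, hr⟩ := hroot
    obtain ⟨t, ht⟩ := exists_sq_add_self_add_eq_zero hr
    exact exists_sq_add_mul_add_mul_sq_eq_of_sq_add_self_add_eq_zero
      (t := algebraMap O K t) (by simpa using congrArg (algebraMap O K) ht) _
  · have ha : IsUnit a := notMem_maximalIdeal.mp fun h ↦ hroot ⟨0, by simpa using h⟩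
    obtain ⟨z, v, hv, hz⟩ := exists_sq_add_self_add_eq_mul_sq ha u.isUnit
    have hz' := congrArg (algebraMap O K) hz
    simp only [map_add, map_mul, map_pow] at hz'
    have hv' : algebraMap O K v ≠ 0 := (hv.map (algebraMap O K)).ne_zero
    obtain ⟨s, hs⟩ : ∃ s, s * algebraMap O K v = algebraMap O K π ^ n :=
      ⟨_, div_mul_cancel₀ _ hv'⟩
    refine ⟨algebraMap O K z * s, s, ?_⟩
    rw [mul_comm 2 n, zpow_mul, zpow_two, ← hs]
    linear_combination s ^ 2 * hz'

/-- Over a local field `K` of characteristic 2 (fraction field of a complete DVR `O` with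
finite residue field), for `a ∈ O` and `c ∈ K×` of even valuation, the equation
`x² + xy + ay² = c` has a solution in `K`. -/
theorem stmt10 (O : Type*) [CommRing O] [IsDomain O] [IsDiscreteValuationRing O]
    [IsAdicComplete (IsLocalRing.maximalIdeal O) O]
    [Finite (IsLocalRing.ResidueField O)]
    (K : Type*) [Field K] [Algebra O K] [IsFractionRing O K] [CharP K 2]
    (π : O) (hπ : Irreducible π) (a : O) (c : K) (hc : c ≠ 0)
    (heven : ∃ (u : Oˣ) (n : ℤ), c = algebraMap O K u * (algebraMap O K π)^(2*n)) :
    ∃ x y : K, x^2 + x*y + algebraMap O K a * y^2 = c :=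
  stmt10_general O K π a c heven
end

section
/- Let F be a complete discretely valued field of characteristic 2 with finite residue field, valuation ring O, and a ∈ O. If c ∈ F× has odd valuation, then x² + xy + ay² = c is solvable in F if and only if X² + X + a has a root in the residue field (equivalently, in F). -/
/-!
Write `N(x, y) = x² + xy + ay²`. If `X² + X + a` has no root in `K`, Hensel's lemma (the
derivative `2X + 1 = 1` is a unit) shows it has no root in the residue field either, so `N` is
anisotropic modulo `π`: `π ∣ N(x, y)` forces `π ∣ x` and `π ∣ y`. Hence a value of `N` on `O²`
of odd order `2k + 1` would come from a value of order `2k - 1` after dividing `x, y` by `π`,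
and descending to order `1` gives a contradiction; clearing denominators by an even power of `π`
reduces the case of `K` to that of `O`. Conversely a root splits `N` into two linear forms, and
a split binary form represents everything.
-/

open IsLocalRing Polynomial Filter

def normForm {R : Type*} [CommRing R] (a x y : R) : R := x ^ 2 + x * y + a * y ^ 2

@[simp]
theorem map_normForm {R S : Type*} [CommRing R] [CommRing S] (f : R →+* S) (a x y : R) :
    f (normForm a x y) = normForm (f a) (f x) (f y) := by
  simp [normForm]

theorem normForm_mul_mul {R : Type*} [CommRing R] (a t x y : R) :
    normForm a (t * x) (t * y) = t ^ 2 * normForm a x y := by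
  unfold normForm; ring

theorem exists_normForm_eq_of_root {R : Type*} [CommRing R] [CharP R 2] {a r : R}
    (hr : r ^ 2 + r + a = 0) (c : R) : ∃ x y : R, normForm a x y = c :=
  -- The form splits as `(x + r y) (x + (r + 1) y)`; solve `x + r y = c`, `x + (r + 1) y = 1`.
  ⟨c + r * (c + 1), c + 1, by
    unfold normForm
    linear_combination (c + 1) ^ 2 * hr +
      (c ^ 2 + r * c ^ 2 + r * c) * (CharTwo.two_eq_zero : (2 : R) = 0)⟩

theorem normForm_eq_zero_iff {F : Type*} [Field F] {a : F} (ha : ∀ r : F, r ^ 2 + r + a ≠ 0)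
    {x y : F} : normForm a x y = 0 ↔ x = 0 ∧ y = 0 := by
  refine ⟨fun h => ?_, fun ⟨hx, hy⟩ => by simp [normForm, hx, hy]⟩
  by_cases hy : y = 0
  · simpa [normForm, hy] using h
  · refine absurd ?_ (ha (x / y))
    unfold normForm at h
    field_simp
    linear_combination h

theorem mem_maximalIdeal_of_normForm_mem {O : Type*} [CommRing O] [IsLocalRing O] {a : O}
    (ha : ∀ r : O, r ^ 2 + r + a ∉ maximalIdeal O) {x y : O}
    (h : normForm a x y ∈ maximalIdeal O) : x ∈ maximalIdeal O ∧ y ∈ maximalIdeal O := by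
  have ha' : ∀ r : ResidueField O, r ^ 2 + r + residue O a ≠ 0 := by
    intro r
    obtain ⟨r, rfl⟩ := residue_surjective r
    have hr := ha r
    rw [← residue_eq_zero_iff] at hr
    simpa using hr
  rw [← residue_eq_zero_iff, map_normForm, normForm_eq_zero_iff ha'] at h
  simpa only [← residue_eq_zero_iff] using h

theorem exists_root_of_mem_maximalIdeal {O : Type*} [CommRing O] [IsLocalRing O]
    [HenselianRing O (maximalIdeal O)] (h2 : (2 : O) ∈ maximalIdeal O) {a r₀ : O}
    (hr₀ : r₀ ^ 2 + r₀ + a ∈ maximalIdeal O) : ∃ r : O, r ^ 2 + r + a = 0 := by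
  have hmonic : (X ^ 2 + X + C a : O[X]).Monic := by monicity!
  have hderiv : (X ^ 2 + X + C a : O[X]).derivative.eval r₀ = 2 * r₀ + 1 := by
    simp only [derivative_add, derivative_X_pow, derivative_X, derivative_C, eval_add, eval_mul,
      eval_C, eval_pow, eval_X, eval_one, eval_zero]
    ring
  have hderiv_unit : IsUnit (Ideal.Quotient.mk (maximalIdeal O) (2 * r₀ + 1)) := by
    rw [map_add, map_mul, Ideal.Quotient.eq_zero_iff_mem.2 h2, zero_mul, zero_add, map_one]
    exact isUnit_one
  obtain ⟨r, hr, -⟩ := HenselianRing.is_henselian (X ^ 2 + X + C a) hmonic r₀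
    (by simpa only [eval_add, eval_pow, eval_X, eval_C] using hr₀) (hderiv ▸ hderiv_unit)
  exact ⟨r, by simpa using hr⟩

theorem normForm_ne_unit_mul_pow_odd {O : Type*} [CommRing O] [IsDomain O] {a π : O}
    (hπ : Irreducible π) (hdiv : ∀ x y, π ∣ normForm a x y → π ∣ x ∧ π ∣ y) (u : Oˣ) (k : ℕ)
    (x y : O) : normForm a x y ≠ u * π ^ (2 * k + 1) := by
  induction k generalizing x y with
  | zero =>
    intro h
    obtain ⟨⟨x, rfl⟩, ⟨y, rfl⟩⟩ := hdiv _ _ ⟨u, by rw [h]; ring⟩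
    rw [normForm_mul_mul] at h
    have hunit : π * normForm a x y = u := mul_left_cancel₀ hπ.ne_zero (by linear_combination h)
    exact hπ.not_isUnit (isUnit_of_mul_isUnit_left (hunit ▸ u.isUnit))
  | succ k ih =>
    intro h
    obtain ⟨⟨x, rfl⟩, ⟨y, rfl⟩⟩ := hdiv _ _ ⟨u * π ^ (2 * k + 2), by rw [h]; ring⟩
    rw [normForm_mul_mul] at h
    exact ih x y (mul_left_cancel₀ (pow_ne_zero 2 hπ.ne_zero) (by linear_combination h))

theorem eventually_exists_algebraMap_eq_pow_mul {O K : Type*} [CommRing O] [IsDomain O]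
    [IsDiscreteValuationRing O] [Field K] [Algebra O K] [IsFractionRing O K] {π : O}
    (hπ : Irreducible π) (x : K) :
    ∀ᶠ e in atTop, ∃ X : O, algebraMap O K X = algebraMap O K π ^ e * x := by
  obtain ⟨X, d, hd, rfl⟩ := IsFractionRing.div_surjective (A := O) x
  obtain ⟨e₀, v, rfl⟩ :=
    IsDiscreteValuationRing.eq_unit_mul_pow_irreducible (nonZeroDivisors.ne_zero hd) hπ
  refine eventually_atTop.2 ⟨e₀, fun e he => ⟨π ^ (e - e₀) * X * ↑v⁻¹, ?_⟩⟩
  obtain ⟨k, rfl⟩ := Nat.exists_eq_add_of_le he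
  have hπ' : algebraMap O K π ≠ 0 := by simpa using hπ.ne_zero
  have hv : algebraMap O K v ≠ 0 := by simp
  simp only [Nat.add_sub_cancel_left, map_mul, map_pow, pow_add, map_units_inv]
  field_simp

theorem exists_root_of_normForm_eq_unit_mul_zpow_odd {O K : Type*} [CommRing O] [IsDomain O]
    [IsDiscreteValuationRing O] [HenselianRing O (maximalIdeal O)] [Field K] [Algebra O K]
    [IsFractionRing O K] (h2 : (2 : O) ∈ maximalIdeal O) {π : O} (hπ : Irreducible π) {a : O}
    {x y : K} {u : Oˣ} {n : ℤ}
    (h : normForm (algebraMap O K a) x y = algebraMap O K u * algebraMap O K π ^ (2 * n + 1)) :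
    ∃ r : O, r ^ 2 + r + a = 0 := by
  by_contra! hroot
  have hdiv : ∀ x y : O, π ∣ normForm a x y → π ∣ x ∧ π ∣ y := by
    simp only [← Ideal.mem_span_singleton,
      ← (IsDiscreteValuationRing.irreducible_iff_uniformizer π).1 hπ]
    exact fun x y => mem_maximalIdeal_of_normForm_mem
      fun r hr => (exists_root_of_mem_maximalIdeal h2 hr).elim hroot
  obtain ⟨e, ⟨X, hX⟩, ⟨Y, hY⟩, hne⟩ := ((eventually_exists_algebraMap_eq_pow_mul hπ x).and
    ((eventually_exists_algebraMap_eq_pow_mul hπ y).and (eventually_ge_atTop n.natAbs))).exists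
  have hπ' : algebraMap O K π ≠ 0 := by simpa using hπ.ne_zero
  have hexp : algebraMap O K π ^ (2 * e) * algebraMap O K π ^ (2 * n + 1) =
      algebraMap O K π ^ (2 * (e + n).toNat + 1) := by
    rw [← zpow_natCast, ← zpow_add₀ hπ', ← zpow_natCast]
    congr 1
    omega
  refine normForm_ne_unit_mul_pow_odd hπ hdiv u (e + n).toNat X Y
    (IsFractionRing.injective O K ?_)
  rw [map_normForm, hX, hY, normForm_mul_mul, h, map_mul, map_pow, ← hexp]
  ring

theorem stmt11_general (O : Type*) [CommRing O] [IsDomain O] [IsDiscreteValuationRing O]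
    [IsAdicComplete (IsLocalRing.maximalIdeal O) O]
    (K : Type*) [Field K] [Algebra O K] [IsFractionRing O K] [CharP K 2]
    (π : O) (hπ : Irreducible π) (a : O) (c : K)
    (hodd : ∃ (u : Oˣ) (n : ℤ), c = algebraMap O K u * (algebraMap O K π)^(2*n+1)) :
    (∃ x y : K, x^2 + x*y + algebraMap O K a * y^2 = c) ↔
      (∃ r : K, r^2 + r + algebraMap O K a = 0) := by
  have : CharP O 2 := (algebraMap O K).charP (IsFractionRing.injective O K) 2
  constructor
  · rintro ⟨x, y, hxy⟩
    obtain ⟨u, n, rfl⟩ := hodd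
    obtain ⟨r, hr⟩ := exists_root_of_normForm_eq_unit_mul_zpow_odd (x := x) (y := y)
      (by simp [CharTwo.two_eq_zero]) hπ hxy
    exact ⟨algebraMap O K r, by simpa using congrArg (algebraMap O K) hr⟩
  · rintro ⟨r, hr⟩
    exact exists_normForm_eq_of_root hr c

/-- Over a local field `K` of characteristic 2 (fraction field of a complete DVR `O` with
finite residue field), for `a ∈ O` and `c ∈ K×` of odd valuation, the equation
`x² + xy + ay² = c` is solvable in `K` iff `X² + X + a` has a root in `K`. -/
theorem stmt11 (O : Type*) [CommRing O] [IsDomain O] [IsDiscreteValuationRing O]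
    [IsAdicComplete (IsLocalRing.maximalIdeal O) O]
    [Finite (IsLocalRing.ResidueField O)]
    (K : Type*) [Field K] [Algebra O K] [IsFractionRing O K] [CharP K 2]
    (π : O) (hπ : Irreducible π) (a : O) (c : K) (hc : c ≠ 0)
    (hodd : ∃ (u : Oˣ) (n : ℤ), c = algebraMap O K u * (algebraMap O K π)^(2*n+1)) :
    (∃ x y : K, x^2 + x*y + algebraMap O K a * y^2 = c) ↔
      (∃ r : K, r^2 + r + algebraMap O K a = 0) :=
  stmt11_general O K π hπ a c hodd
end

section
/- Let F be a complete discretely valued field of characteristic 2 with uniformizer f, and let b, c ∈ F with v(b) = 0 and v(c) ∈ {0, 1}. Fix r ≥ 0. Then the equation f^{2r+1}x² + f^{2r+1}xy + by² = c·f^{2r} has a solution (x, y) ∈ F² if and only if it has a solution modulo f^{4r+3} (with x, y in the valuation ring). Moreover, any solution (x, y) ∈ F² automatically lies in the valuation ring. -/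
/-!
Write `Q(x, y) = π^(2r+1) (x² + x y) + b y²`. Clearing a common denominator `π ^ n` of a
solution in `K` gives an integral solution with `Q` divisible by `π ^ (2r + 2n)`. Since
`π^(2r+1) x²` has odd and `b y²` even valuation, `π^(2r+2) ∣ Q(x, y)` forces `π ∣ x` and
`π ∣ y`; descending `n` times shows that the solution was integral. Conversely, a solution modulo
`π^(4r+3)` is corrected by Hensel's lemma for an Artin–Schreier equation `u² + u + e = 0`: in
characteristic 2, moving one coordinate changes `Q` by a quadratic in the increment. When `c`
is a unit, `y₀` has valuation exactly `r` and one moves `x₀`; when `v(c) = 1`, `x₀` is a unit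
and one moves `y₀`.
-/

open IsLocalRing Polynomial

section BinaryForm

variable {R : Type*} [CommRing R]

def binaryForm (t b x y : R) : R := t * x ^ 2 + t * x * y + b * y ^ 2

theorem binaryForm_mul (t b s x y : R) :
    binaryForm t b (s * x) (s * y) = s ^ 2 * binaryForm t b x y := by
  unfold binaryForm; ring

theorem map_binaryForm {S : Type*} [CommRing S] (f : R →+* S) (t b x y : R) :
    f (binaryForm t b x y) = binaryForm (f t) (f b) (f x) (f y) := by
  simp only [binaryForm, map_add, map_mul, map_pow]

variable [CharP R 2]

theorem binaryForm_add_left (t b x y δ : R) :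
    binaryForm t b (x + δ) y = binaryForm t b x y + t * (δ ^ 2 + y * δ) := by
  unfold binaryForm; linear_combination (t * x * δ) * CharTwo.two_eq_zero (R := R)

theorem binaryForm_add_right (t b x y δ : R) :
    binaryForm t b x (y + δ) = binaryForm t b x y + (b * δ ^ 2 + t * x * δ) := by
  unfold binaryForm; linear_combination (b * y * δ) * CharTwo.two_eq_zero (R := R)

end BinaryForm

theorem Prime.pow_succ_dvd_of_pow_dvd_sq {M : Type*} [CommMonoidWithZero M] [IsCancelMulZero M]
    {p : M} (hp : Prime p) {k : ℕ} {y : M} (h : p ^ (2 * k + 1) ∣ y ^ 2) :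
    p ^ (k + 1) ∣ y := by
  induction k generalizing y with
  | zero => simpa using hp.dvd_of_dvd_pow (n := 2) (by simpa using h)
  | succ k ih =>
    obtain ⟨z, rfl⟩ := hp.dvd_of_dvd_pow (dvd_trans (dvd_pow_self p (by omega)) h)
    rw [show 2 * (k + 1) + 1 = 2 + (2 * k + 1) by ring, pow_add, mul_pow,
      mul_dvd_mul_iff_left (pow_ne_zero 2 hp.ne_zero)] at h
    rw [pow_succ']
    exact mul_dvd_mul_left p (ih h)

section Divisibility

variable {R : Type*} [CommRing R] [IsDomain R] {p b x y : R}

theorem Prime.dvd_of_pow_dvd_binaryForm (hp : Prime p) (hb : ¬p ∣ b) {k : ℕ}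
    (h : p ^ (2 * k + 2) ∣ binaryForm (p ^ (2 * k + 1)) b x y) : p ∣ x ∧ p ∣ y := by
  have hby : p ^ (2 * k + 1) ∣ b * y ^ 2 := by
    have h' : p ^ (2 * k + 1) ∣ binaryForm (p ^ (2 * k + 1)) b x y :=
      dvd_trans (pow_dvd_pow p (by omega)) h
    rwa [binaryForm, show p ^ (2 * k + 1) * x ^ 2 + p ^ (2 * k + 1) * x * y =
      p ^ (2 * k + 1) * (x ^ 2 + x * y) by ring, dvd_add_right (dvd_mul_right _ _)] at h'
  have hy : p ^ (k + 1) ∣ y :=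
    hp.pow_succ_dvd_of_pow_dvd_sq (hp.pow_dvd_of_dvd_mul_left _ hb hby)
  have hx : p ^ (2 * k + 2) ∣ p ^ (2 * k + 1) * x ^ 2 := by
    obtain ⟨z, rfl⟩ := hy
    rwa [binaryForm, add_assoc, dvd_add_left ⟨x * p ^ k * z + b * z ^ 2, by ring⟩] at h
  rw [pow_succ, mul_dvd_mul_iff_left (pow_ne_zero _ hp.ne_zero)] at hx
  exact ⟨hp.dvd_of_dvd_pow hx, dvd_trans (dvd_pow_self p (by omega)) hy⟩

theorem Prime.pow_dvd_of_pow_dvd_binaryForm (hp : Prime p) (hb : ¬p ∣ b) {k m : ℕ}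
    (h : p ^ (2 * k + 2 * m) ∣ binaryForm (p ^ (2 * k + 1)) b x y) :
    p ^ m ∣ x ∧ p ^ m ∣ y := by
  induction m generalizing x y with
  | zero => simp
  | succ m ih =>
    obtain ⟨⟨x, rfl⟩, ⟨y, rfl⟩⟩ :=
      hp.dvd_of_pow_dvd_binaryForm hb (dvd_trans (pow_dvd_pow p (by omega)) h)
    rw [binaryForm_mul, show 2 * k + 2 * (m + 1) = 2 + (2 * k + 2 * m) by ring, pow_add,
      mul_dvd_mul_iff_left (pow_ne_zero _ hp.ne_zero)] at h
    obtain ⟨hx, hy⟩ := ih h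
    rw [pow_succ']
    exact ⟨mul_dvd_mul_left p hx, mul_dvd_mul_left p hy⟩

end Divisibility

theorem HenselianRing.exists_sq_add_self_add_eq_zero {R : Type*} [CommRing R] {I : Ideal R}
    [HenselianRing R I] {e : R} (he : e ∈ I) : ∃ u : R, u ^ 2 + u + e = 0 := by
  obtain ⟨u, hu, -⟩ := HenselianRing.is_henselian (I := I) (X ^ 2 + X + C e) (by monicity!) 0
    (by simpa using he) (by simp)
  exact ⟨u, by simpa using hu⟩

theorem HenselianRing.exists_mul_sq_add_mul_add_eq_zero {R : Type*} [CommRing R] {I : Ideal R}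
    [HenselianRing R I] {a B ρ e : R} (ha : IsUnit a) (h : a * ρ = B ^ 2 * e) (he : e ∈ I) :
    ∃ δ : R, a * δ ^ 2 + B * δ + ρ = 0 := by
  obtain ⟨u, hu⟩ := exists_sq_add_self_add_eq_zero he
  obtain ⟨a', ha'⟩ := ha.exists_left_inv
  -- the substitution `δ = a⁻¹ B u` turns the equation into `u² + u + e = 0`
  refine ⟨a' * B * u, ?_⟩
  linear_combination (a' * B ^ 2) * hu + (a' * B ^ 2 * u ^ 2 - ρ) * ha' + a' * h

theorem IsLocalRing.isUnit_add_of_mem_maximalIdeal {R : Type*} [CommRing R] [IsLocalRing R]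
    {u a : R} (hu : IsUnit u) (ha : a ∈ maximalIdeal R) : IsUnit (u + a) :=
  (isUnit_or_isUnit_of_isUnit_add (by rwa [add_neg_cancel_right])).resolve_right
    ((mem_maximalIdeal _).mp (neg_mem ha))

section Lifting

variable {R : Type*} [CommRing R] [IsLocalRing R] [HenselianRing R (maximalIdeal R)] [CharP R 2]
  {p b u x₀ y₀ : R} {r : ℕ}

theorem exists_binaryForm_eq_unit_mul_pow (hp : p ∈ maximalIdeal R) (hu : IsUnit u)
    (h : p ^ (4 * r + 3) ∣ binaryForm (p ^ (2 * r + 1)) b x₀ y₀ - u * p ^ (2 * r)) :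
    ∃ x y : R, binaryForm (p ^ (2 * r + 1)) b x y = u * p ^ (2 * r) := by
  obtain ⟨ρ, hρ⟩ := h
  set W := u + p * (p ^ (2 * r + 2) * ρ - x₀ ^ 2 - x₀ * y₀)
  have hW : b * y₀ ^ 2 = p ^ (2 * r) * W := by unfold binaryForm at hρ; linear_combination hρ
  obtain ⟨w, hw⟩ := (isUnit_add_of_mem_maximalIdeal hu (Ideal.mul_mem_right _ _ hp) :
    IsUnit W).exists_left_inv
  -- as `b y₀² = p^(2r) W` with `W` a unit, `p^(2r+2) ρ` lies in `y₀² 𝔪`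
  have hsmall : 1 * (p ^ (2 * r + 2) * ρ) = y₀ ^ 2 * (p * (p * ρ * b * w)) := by
    linear_combination -(p ^ 2 * ρ * w) * hW - (p ^ (2 * r + 2) * ρ) * hw
  obtain ⟨δ, hδ⟩ := HenselianRing.exists_mul_sq_add_mul_add_eq_zero isUnit_one hsmall
    (Ideal.mul_mem_right _ _ hp)
  refine ⟨x₀ + δ, y₀, ?_⟩
  rw [binaryForm_add_left]
  linear_combination hρ + p ^ (2 * r + 1) * hδ

theorem exists_binaryForm_eq_unit_mul_mul_pow [IsDomain R] (hp : Prime p) (hb : IsUnit b)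
    (hu : IsUnit u)
    (h : p ^ (4 * r + 3) ∣ binaryForm (p ^ (2 * r + 1)) b x₀ y₀ - u * p * p ^ (2 * r)) :
    ∃ x y : R, binaryForm (p ^ (2 * r + 1)) b x y = u * p * p ^ (2 * r) := by
  obtain ⟨ρ, hρ⟩ := h
  unfold binaryForm at hρ
  have hpm : p ∈ maximalIdeal R := (mem_maximalIdeal _).mpr hp.not_isUnit
  have hy : p ^ (2 * r + 1) ∣ b * y₀ ^ 2 :=
    ⟨u - x₀ ^ 2 - x₀ * y₀ + p ^ (2 * r + 2) * ρ, by linear_combination hρ⟩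
  obtain ⟨z, rfl⟩ := hp.pow_succ_dvd_of_pow_dvd_sq (hb.dvd_mul_left.mp hy)
  have hx : IsUnit x₀ := by
    have hx₂ : x₀ ^ 2 = u + p * (p ^ (2 * r + 1) * ρ - p ^ r * x₀ * z - b * z ^ 2) := by
      refine mul_left_cancel₀ (pow_ne_zero (2 * r + 1) hp.ne_zero) ?_
      linear_combination hρ
    rw [← isUnit_pow_iff two_ne_zero, hx₂]
    exact isUnit_add_of_mem_maximalIdeal hu (Ideal.mul_mem_right _ _ hpm)
  obtain ⟨w, hw⟩ := hx.exists_left_inv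
  have hsmall :
      b * (p ^ (4 * r + 3) * ρ) = (p ^ (2 * r + 1) * x₀) ^ 2 * (p * (b * ρ * w ^ 2)) := by
    linear_combination (-(b * p ^ (4 * r + 3) * ρ * (1 + w * x₀))) * hw
  obtain ⟨δ, hδ⟩ := HenselianRing.exists_mul_sq_add_mul_add_eq_zero hb hsmall
    (Ideal.mul_mem_right _ _ hpm)
  refine ⟨x₀, p ^ (r + 1) * z + δ, ?_⟩
  rw [binaryForm_add_right]
  unfold binaryForm
  linear_combination hρ + hδ

end Lifting

theorem exists_algebraMap_eq_of_binaryForm_eq {O K : Type*} [CommRing O] [IsDomain O]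
    [IsDiscreteValuationRing O] [Field K] [Algebra O K] [IsFractionRing O K] {π b : O}
    (hπ : Irreducible π) (hb : ¬π ∣ b) {r : ℕ} {c : O} {x y : K}
    (h : binaryForm (algebraMap O K (π ^ (2 * r + 1))) (algebraMap O K b) x y =
      algebraMap O K (c * π ^ (2 * r))) :
    (∃ x' : O, algebraMap O K x' = x) ∧ (∃ y' : O, algebraMap O K y' = y) := by
  obtain ⟨a, a', ⟨d, hd⟩, hx, hy⟩ := IsLocalization.surj₂ (nonZeroDivisors O) (S := K) x y
  obtain ⟨n, u, rfl⟩ := IsDiscreteValuationRing.eq_unit_mul_pow_irreducible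
    (nonZeroDivisors.ne_zero hd) hπ
  have hQ : binaryForm (π ^ (2 * r + 1)) b a a' = c * π ^ (2 * r) * (u * π ^ n) ^ 2 := by
    refine IsFractionRing.injective O K ?_
    rw [map_binaryForm, ← hx, ← hy, mul_comm x, mul_comm y, binaryForm_mul, h]
    simp only [map_mul, map_pow]
    ring
  obtain ⟨ha, ha'⟩ := hπ.prime.pow_dvd_of_pow_dvd_binaryForm hb (k := r) (m := n)
    ⟨c * u ^ 2, by rw [hQ]; ring⟩
  have integer {z : K} {e : O} (hz : z * algebraMap O K (u * π ^ n) = algebraMap O K e)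
      (he : π ^ n ∣ e) : ∃ k : O, algebraMap O K k = z := by
    obtain ⟨k, rfl⟩ := (Units.mul_left_dvd (u := u)).mpr he
    refine ⟨k, mul_right_cancel₀ (IsFractionRing.to_map_ne_zero_of_mem_nonZeroDivisors hd) ?_⟩
    rw [hz, map_mul _ _ k, mul_comm]
  exact ⟨integer hx ha, integer hy ha'⟩

/-- Let `O` be a complete DVR of characteristic 2 with uniformizer `π` and fraction
field `K`; let `b` be a unit and `v(c) ∈ {0,1}`. Then
`π^{2r+1}x² + π^{2r+1}xy + by² = cπ^{2r}` has a solution in `K` iff it has a solution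
modulo `π^{4r+3}` with `x, y` integral; moreover every `K`-solution is integral. -/
theorem stmt12 (O : Type*) [CommRing O] [IsDomain O] [IsDiscreteValuationRing O]
    [IsAdicComplete (IsLocalRing.maximalIdeal O) O]
    (K : Type*) [Field K] [Algebra O K] [IsFractionRing O K] [CharP K 2]
    (π : O) (hπ : Irreducible π) (b : Oˣ) (c : O)
    (hc : ∃ u : Oˣ, c = u ∨ c = u * π) (r : ℕ) :
    ((∃ x y : K, algebraMap O K (π^(2*r+1)) * x^2 + algebraMap O K (π^(2*r+1)) * x * y
        + algebraMap O K (b : O) * y^2 = algebraMap O K (c * π^(2*r)))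
      ↔ (∃ x y : O, π^(4*r+3) ∣
          (π^(2*r+1)*x^2 + π^(2*r+1)*x*y + (b : O)*y^2 - c*π^(2*r))))
    ∧ (∀ x y : K, algebraMap O K (π^(2*r+1)) * x^2 + algebraMap O K (π^(2*r+1)) * x * y
          + algebraMap O K (b : O) * y^2 = algebraMap O K (c * π^(2*r)) →
        (∃ x' : O, algebraMap O K x' = x) ∧ (∃ y' : O, algebraMap O K y' = y)) := by
  have hb : ¬π ∣ b := fun h => hπ.not_isUnit (isUnit_of_dvd_unit h b.isUnit)
  have integral (x y : K)
      (h : binaryForm (algebraMap O K (π ^ (2 * r + 1))) (algebraMap O K b) x y =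
        algebraMap O K (c * π ^ (2 * r))) :=
    exists_algebraMap_eq_of_binaryForm_eq hπ hb h
  have : CharP O 2 := (algebraMap O K).charP (IsFractionRing.injective O K) 2
  refine ⟨⟨fun ⟨x, y, h⟩ => ?_, fun ⟨x₀, y₀, h⟩ => ?_⟩, integral⟩
  · obtain ⟨⟨x, rfl⟩, ⟨y, rfl⟩⟩ := integral x y h
    have hxy : binaryForm (π ^ (2 * r + 1)) (b : O) x y = c * π ^ (2 * r) :=
      IsFractionRing.injective O K (by rw [map_binaryForm]; exact h)
    exact ⟨x, y, 0, by rw [mul_zero]; exact sub_eq_zero.mpr hxy⟩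
  · obtain ⟨x, y, hxy⟩ :
        ∃ x y : O, binaryForm (π ^ (2 * r + 1)) b x y = c * π ^ (2 * r) := by
      obtain ⟨u, rfl | rfl⟩ := hc
      · exact exists_binaryForm_eq_unit_mul_pow ((mem_maximalIdeal _).mpr hπ.not_isUnit)
          u.isUnit h
      · exact exists_binaryForm_eq_unit_mul_mul_pow hπ.prime b.isUnit u.isUnit h
    exact ⟨algebraMap O K x, algebraMap O K y, by rw [← hxy, map_binaryForm]; rfl⟩
end

section
/- Let F be a complete discretely valued field of characteristic 2 with uniformizer f and valuation ring O; let b ∈ O× and suppose the residue field has the property that b is not of the form x² + x modulo f (i.e., X² + X + b is irreducible over F). Then for any unit c ∈ O×, the equation f·x² + f·xy + by² = c has no solution with v(y) ≠ 0; in fact any solution (x,y) ∈ F² to f^{2r+1}x² + f^{2r+1}xy + by² = cf^{2r} with b, c units satisfies v(x) ≥ 0 and v(y) ≥ r. -/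
section helpers

variable {O : Type*} [CommRing O] [IsDomain O]

private lemma not_lt_of_pow_eq {π : O} (hπ : Irreducible π) (U V : Oˣ) {i j : ℕ}
    (h : π ^ i * (U : O) = π ^ j * (V : O)) : ¬ i < j := by
  intro hij
  obtain ⟨d, rfl⟩ : ∃ d, j = i + (d + 1) := ⟨j - i - 1, by omega⟩
  have hU : (U : O) = π * (π ^ d * V) := by
    apply mul_left_cancel₀ (pow_ne_zero i hπ.ne_zero)
    rw [h]; ring
  exact hπ.not_isUnit (isUnit_of_dvd_unit ⟨_, hU⟩ U.isUnit)

private lemma two_term {π : O} (hπ : Irreducible π) (U V : Oˣ) {i j : ℕ}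
    (h : π ^ i * (U : O) = π ^ j * (V : O)) : i = j := by
  have h1 := not_lt_of_pow_eq hπ U V h
  have h2 := not_lt_of_pow_eq hπ V U h.symm
  omega

private lemma three_term {π : O} (hπ : Irreducible π) (U V W X : Oˣ) {e1 e2 e3 e4 : ℕ}
    (h12 : e1 < e2) (h13 : e1 < e3)
    (h : π ^ e1 * (U : O) + π ^ e2 * (V : O) + π ^ e3 * (W : O) = π ^ e4 * (X : O)) :
    e1 = e4 := by
  rcases lt_trichotomy e1 e4 with h14 | h14 | h14
  · exfalso
    obtain ⟨d2, rfl⟩ : ∃ d, e2 = e1 + (d + 1) := ⟨e2 - e1 - 1, by omega⟩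
    obtain ⟨d3, rfl⟩ : ∃ d, e3 = e1 + (d + 1) := ⟨e3 - e1 - 1, by omega⟩
    obtain ⟨d4, rfl⟩ : ∃ d, e4 = e1 + (d + 1) := ⟨e4 - e1 - 1, by omega⟩
    have hU : (U : O) = π * (π ^ d4 * X - π ^ d2 * V - π ^ d3 * W) := by
      apply mul_left_cancel₀ (pow_ne_zero e1 hπ.ne_zero)
      linear_combination h
    exact hπ.not_isUnit (isUnit_of_dvd_unit ⟨_, hU⟩ U.isUnit)
  · exact h14
  · exfalso
    obtain ⟨d1, rfl⟩ : ∃ d, e1 = e4 + (d + 1) := ⟨e1 - e4 - 1, by omega⟩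
    obtain ⟨d2, rfl⟩ : ∃ d, e2 = e4 + (d + 1) := ⟨e2 - e4 - 1, by omega⟩
    obtain ⟨d3, rfl⟩ : ∃ d, e3 = e4 + (d + 1) := ⟨e3 - e4 - 1, by omega⟩
    have hX : (X : O) = π * (π ^ d1 * U + π ^ d2 * V + π ^ d3 * W) := by
      apply mul_left_cancel₀ (pow_ne_zero e4 hπ.ne_zero)
      linear_combination -h
    exact hπ.not_isUnit (isUnit_of_dvd_unit ⟨_, hX⟩ X.isUnit)

end helpers

private lemma aux_main {O : Type*} [CommRing O] [IsDomain O] [IsDiscreteValuationRing O]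
    {K : Type*} [Field K] [Algebra O K] [IsFractionRing O K]
    {π : O} (hπ : Irreducible π) (b : Oˣ)
    (r : ℕ) (c : Oˣ) (x y : K)
    (h : algebraMap O K (π^(2*r+1)) * x^2 + algebraMap O K (π^(2*r+1)) * x * y
          + algebraMap O K (b : O) * y^2 = algebraMap O K ((c : O) * π^(2*r))) :
    (∃ x' : O, algebraMap O K x' = x) ∧ (∃ u : Oˣ, y = algebraMap O K (π^r * (u : O))) := by
  have inj : Function.Injective (algebraMap O K) := IsFractionRing.injective O K
  obtain ⟨a1, s1, hs1, hx⟩ := IsFractionRing.div_surjective (A := O) x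
  obtain ⟨a2, s2, hs2, hy⟩ := IsFractionRing.div_surjective (A := O) y
  have hs1' : algebraMap O K s1 ≠ 0 :=
    IsFractionRing.to_map_ne_zero_of_mem_nonZeroDivisors hs1
  have hs2' : algebraMap O K s2 ≠ 0 :=
    IsFractionRing.to_map_ne_zero_of_mem_nonZeroDivisors hs2
  obtain ⟨A, B, d, hA, hB, hd0⟩ : ∃ A B d : O, algebraMap O K A = x * algebraMap O K d
      ∧ algebraMap O K B = y * algebraMap O K d ∧ d ≠ 0 := by
    refine ⟨a1 * s2, a2 * s1, s1 * s2, ?_, ?_, mul_ne_zero (nonZeroDivisors.ne_zero hs1)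
      (nonZeroDivisors.ne_zero hs2)⟩
    · rw [← hx, map_mul, map_mul]; field_simp
    · rw [← hy, map_mul, map_mul]; field_simp
  have hdK : algebraMap O K d ≠ 0 := fun hh => hd0 (inj (by rw [hh, map_zero]))
  have hO : π^(2*r+1) * A^2 + π^(2*r+1) * (A*B) + (b : O) * B^2 = (c : O) * π^(2*r) * d^2 := by
    apply inj
    simp only [map_add, map_mul, map_pow]
    rw [hA, hB]
    simp only [map_mul, map_pow] at h
    linear_combination (algebraMap O K d)^2 * h
  obtain ⟨k, e, hd⟩ := IsDiscreteValuationRing.eq_unit_mul_pow_irreducible hd0 hπ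
  by_cases hB0 : B = 0
  · exfalso
    by_cases hA0 : A = 0
    · rw [hA0, hB0, hd] at hO
      simp only [mul_zero, zero_mul, ne_eq, OfNat.ofNat_ne_zero, not_false_eq_true,
        zero_pow, add_zero, zero_add, mul_pow] at hO
      exact (mul_ne_zero (mul_ne_zero c.ne_zero (pow_ne_zero _ hπ.ne_zero))
        (mul_ne_zero (pow_ne_zero _ e.ne_zero) (pow_ne_zero _ (pow_ne_zero _ hπ.ne_zero)))) hO.symm
    · obtain ⟨α, u, hAe⟩ := IsDiscreteValuationRing.eq_unit_mul_pow_irreducible hA0 hπ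
      rw [hAe, hB0, hd] at hO
      have := two_term hπ (u^2) (c * e^2) (i := 2*r+1+2*α) (j := 2*r+2*k) (by
        simp only [Units.val_mul, Units.val_pow_eq_pow_val]
        linear_combination hO)
      omega
  obtain ⟨β, w, hBe⟩ := IsDiscreteValuationRing.eq_unit_mul_pow_irreducible hB0 hπ
  by_cases hA0 : A = 0
  · rw [hA0, hBe, hd] at hO
    have h2 : 2*β = 2*r+2*k := two_term hπ (b * w^2) (c * e^2) (by
      simp only [Units.val_mul, Units.val_pow_eq_pow_val]
      linear_combination hO)
    obtain rfl : β = r + k := by omega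
    constructor
    · refine ⟨0, ?_⟩
      apply mul_right_cancel₀ hdK
      rw [map_zero, zero_mul, ← hA, hA0, map_zero]
    · refine ⟨w * e⁻¹, ?_⟩
      have key : (π^r * ((w * e⁻¹ : Oˣ) : O)) * d = B := by
        rw [hd, hBe]
        simp only [Units.val_mul]
        linear_combination (π^(r+k) * (w : O)) * e.inv_mul
      symm
      apply mul_right_cancel₀ hdK
      rw [← map_mul, key, hB]
  · obtain ⟨α, u, hAe⟩ := IsDiscreteValuationRing.eq_unit_mul_pow_irreducible hA0 hπ
    rw [hAe, hBe, hd] at hO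
    have hOO : π^(2*r+1+2*α) * ((u^2 : Oˣ) : O) + π^(2*r+1+α+β) * ((u*w : Oˣ) : O)
        + π^(2*β) * ((b*w^2 : Oˣ) : O) = π^(2*r+2*k) * ((c*e^2 : Oˣ) : O) := by
      simp only [Units.val_mul, Units.val_pow_eq_pow_val]
      linear_combination hO
    rcases lt_trichotomy (2*r+1+2*α) (2*β) with hlt | heq | hgt
    · exfalso
      have h1 := three_term hπ _ _ _ _ (by omega : 2*r+1+2*α < 2*r+1+α+β) hlt hOO
      omega
    · omega
    · have hOO' : π^(2*β) * ((b*w^2 : Oˣ) : O) + π^(2*r+1+2*α) * ((u^2 : Oˣ) : O)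
          + π^(2*r+1+α+β) * ((u*w : Oˣ) : O) = π^(2*r+2*k) * ((c*e^2 : Oˣ) : O) := by
        linear_combination hOO
      have h3 := three_term hπ _ _ _ _ (by omega) (by omega) hOO'
      obtain rfl : β = r + k := by omega
      obtain ⟨α', rfl⟩ : ∃ α', α = k + α' := ⟨α - k, by omega⟩
      constructor
      · refine ⟨π^α' * ((u * e⁻¹ : Oˣ) : O), ?_⟩
        have key : (π^α' * ((u * e⁻¹ : Oˣ) : O)) * d = A := by
          rw [hd, hAe]
          simp only [Units.val_mul]
          linear_combination (π^(k+α') * (u : O)) * e.inv_mul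
        apply mul_right_cancel₀ hdK
        rw [← map_mul, key, hA]
      · refine ⟨w * e⁻¹, ?_⟩
        have key : (π^r * ((w * e⁻¹ : Oˣ) : O)) * d = B := by
          rw [hd, hBe]
          simp only [Units.val_mul]
          linear_combination (π^(r+k) * (w : O)) * e.inv_mul
        symm
        apply mul_right_cancel₀ hdK
        rw [← map_mul, key, hB]

/-- Let `O` be a complete DVR of characteristic 2 with uniformizer `π` and fraction field
`K`, and let `b ∈ O×` be such that `X² + X + b` has no root modulo `π`. Then for any unit
`c`, every solution of `πx² + πxy + by² = c` has `v(y) = 0`; and in fact every solution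
`(x, y) ∈ K²` of `π^{2r+1}x² + π^{2r+1}xy + by² = cπ^{2r}` satisfies `v(x) ≥ 0` and
`v(y) ≥ r`. -/
theorem stmt13 (O : Type*) [CommRing O] [IsDomain O] [IsDiscreteValuationRing O]
    [IsAdicComplete (IsLocalRing.maximalIdeal O) O]
    (K : Type*) [Field K] [Algebra O K] [IsFractionRing O K] [CharP K 2]
    (π : O) (hπ : Irreducible π) (b : Oˣ)
    (hb : ¬ ∃ x : O, π ∣ (x^2 + x - (b : O))) :
    (∀ c : Oˣ, ∀ x y : K,
        algebraMap O K π * x^2 + algebraMap O K π * x * y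
          + algebraMap O K (b : O) * y^2 = algebraMap O K (c : O) →
        ∃ y' : Oˣ, y = algebraMap O K (y' : O))
    ∧ (∀ (r : ℕ) (c : Oˣ), ∀ x y : K,
        algebraMap O K (π^(2*r+1)) * x^2 + algebraMap O K (π^(2*r+1)) * x * y
          + algebraMap O K (b : O) * y^2 = algebraMap O K ((c : O) * π^(2*r)) →
        (∃ x' : O, algebraMap O K x' = x) ∧ (∃ y' : O, y = algebraMap O K (π^r * y'))) := by
  constructor
  · intro c x y h
    obtain ⟨-, u, hy⟩ := aux_main hπ b 0 c x y (by simpa using h)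
    exact ⟨u, by simpa using hy⟩
  · intro r c x y h
    obtain ⟨hx, u, hy⟩ := aux_main hπ b r c x y h
    exact ⟨hx, ⟨(u : O), hy⟩⟩
end

section
/- Let K be a field, L/K a separable quadratic extension with Gal(L/K) = {1, σ}, and A a central simple algebra over L. The switch map s on A ⊗_L A^σ, defined on elementary tensors by s(a ⊗ b^σ) = b ⊗ a^σ and extended K-linearly, is a K-algebra automorphism of order 2, and its fixed subalgebra is a central simple K-algebra of K-dimension equal to (dim_L A)². -/
/-!
`T = A ⊗[L] A^σ` is central simple over `L`. Work with coordinates in `A` with respect to an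
`L`-basis of `A^σ`; left and right multiplication by `a ⊗ 1` act on them coordinatewise. A central
element has central, hence scalar, coordinates, so it lies in `1 ⊗ A^σ` and then in `L`. In a nonzero
ideal take an element with the fewest nonzero coordinates; as `A` is simple one coordinate can be
made `1`, after which every commutator with `A ⊗ 1` has fewer coordinates and so vanishes. The
element then lies in `1 ⊗ A^σ`, and simplicity of `A^σ` puts `1` in the ideal.

Since `[L : K] = 2`, `σ² = 1`, and the switch `s` is a `σ`-semilinear ring involution of `T`. With
`tr t = t + s t` and `σ l ≠ l`, the identity `(l - σ l) • t = tr (l • t) - σ l • tr t` shows that the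
fixed algebra `C` spans `T` over `L`. Hence the centre of `C` is central in `T` and lies in
`L ∩ C = K`. The `L`-span of a nonzero ideal `I` of `C` is an ideal of `T`, so contains `1`; the map
`t ↦ tr (μ • t)` sends it back into `I`, and sends `1` to the nonzero scalar `μ + σ μ ∈ K` for a
suitable `μ`. Finally `(c, c') ↦ c + l • c'` embeds `C × C` into `T` and `L ⊗[K] C` maps onto `T`,
so `dim_K C = dim_L T = (dim_L A)²`.
-/

open scoped TensorProduct Pointwise
open Module

namespace AlgEquiv

variable {K L : Type*} [Field K] [Field L] [Algebra K L]

theorem sq_eq_one_of_finrank_eq_two (hdim : finrank K L = 2) (σ : L ≃ₐ[K] L) : σ ^ 2 = 1 := by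
  have : FiniteDimensional K L := Module.finite_of_finrank_eq_succ hdim
  have hcard := hdim ▸ AlgEquiv.card_le (F := K) (K := L)
  have hpos := Fintype.card_pos (α := L ≃ₐ[K] L)
  interval_cases h : Fintype.card (L ≃ₐ[K] L)
  · exact (Fintype.card_le_one_iff_subsingleton.1 h.le).elim _ _
  · exact h ▸ pow_card_eq_one

theorem apply_apply_of_finrank_eq_two (hdim : finrank K L = 2) (σ : L ≃ₐ[K] L) (μ : L) :
    σ (σ μ) = μ :=
  congr($(sq_eq_one_of_finrank_eq_two hdim σ) μ)

theorem mem_bot_of_apply_eq_self (hdim : finrank K L = 2) {σ : L ≃ₐ[K] L} (hσ : σ ≠ 1)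
    {μ : L} (hμ : σ μ = μ) : μ ∈ (⊥ : IntermediateField K L) := by
  have := IntermediateField.isSimpleOrder_of_finrank_prime K L (hdim ▸ Nat.prime_two)
  refine IntermediateField.adjoin_simple_eq_bot_iff.1 <|
    (eq_bot_or_eq_top (IntermediateField.adjoin K {μ})).resolve_right fun htop =>
      hσ <| AlgEquiv.ext fun x => ?_
  refine IntermediateField.adjoin_induction K (p := fun x _ => σ x = x) (fun y hy => ?_)
    σ.commutes (fun _ _ _ _ hx hy => by rw [map_add, hx, hy]) (fun _ _ hx => by rw [map_inv₀, hx])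
    (fun _ _ _ _ hx hy => by rw [map_mul, hx, hy]) (htop ▸ IntermediateField.mem_top)
  rwa [Set.mem_singleton_iff.1 hy]

theorem exists_algebraMap_eq_add_apply (hdim : finrank K L = 2) {σ : L ≃ₐ[K] L} (hσ : σ ≠ 1)
    (μ : L) : ∃ k : K, algebraMap K L k = μ + σ μ :=
  IntermediateField.mem_bot.1 <| mem_bot_of_apply_eq_self hdim hσ <| by
    rw [map_add, apply_apply_of_finrank_eq_two hdim, add_comm]

theorem exists_add_apply_ne_zero {σ : L ≃ₐ[K] L} (hσ : σ ≠ 1) : ∃ μ, μ + σ μ ≠ 0 := by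
  by_contra! h
  have h2 : (2 : L) = 0 := by simpa [one_add_one_eq_two] using h 1
  refine hσ (AlgEquiv.ext fun μ => ?_)
  rw [AlgEquiv.one_apply]
  linear_combination h μ - μ * h2

end AlgEquiv

namespace Algebra.TensorProduct

variable {L A B ι : Type*} [Field L] [Ring A] [Ring B] [Algebra L A] [Algebra L B]
  (b : Basis ι L B)

theorem basis_repr_tmul_one_mul (a : A) (x : A ⊗[L] B) :
    (basis A b).repr ((a ⊗ₜ 1) * x) = a • (basis A b).repr x := by
  rw [← map_smul]
  congr 1
  induction x using TensorProduct.induction_on with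
  | zero => simp
  | tmul c m => simp [TensorProduct.smul_tmul']
  | add x y hx hy => simp [mul_add, hx, hy]

theorem basis_repr_mul_tmul_one (a : A) (x : A ⊗[L] B) (i : ι) :
    (basis A b).repr (x * (a ⊗ₜ 1)) i = (basis A b).repr x i * a := by
  induction x using TensorProduct.induction_on with
  | zero => simp
  | tmul c m => simp [basis_repr_tmul, mul_assoc, Algebra.commutes]
  | add x y hx hy => simp [add_mul, hx, hy]

theorem exists_eq_one_tmul_of_basis_repr_mem_center [IsCentral L A] (x : A ⊗[L] B)
    (hx : ∀ i, (basis A b).repr x i ∈ Subalgebra.center L A) : ∃ y : B, x = 1 ⊗ₜ y := by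
  choose μ hμ using fun i => (IsCentral.mem_center_iff L).1 (hx i)
  refine ⟨((basis A b).repr x).sum fun i _ => μ i • b i, ?_⟩
  conv_lhs => rw [← (basis A b).linearCombination_repr x]
  simp only [Finsupp.linearCombination_apply, Finsupp.sum, TensorProduct.tmul_sum]
  refine Finset.sum_congr rfl fun i _ => ?_
  rw [basis_repr_symm_apply', hμ, Algebra.algebraMap_eq_smul_one, TensorProduct.smul_tmul]

instance _root_.Algebra.IsCentral.tensorProduct [Nontrivial A] [IsCentral L A] [IsCentral L B] :
    IsCentral L (A ⊗[L] B) where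
  out z hz := by
    let b := Basis.ofVectorSpace L B
    rw [Subalgebra.mem_center_iff] at hz
    obtain ⟨y, rfl⟩ := exists_eq_one_tmul_of_basis_repr_mem_center b z fun i =>
      Subalgebra.mem_center_iff.2 fun a => by
        simpa [basis_repr_tmul_one_mul, basis_repr_mul_tmul_one] using
          congr(((basis A b).repr $(hz (a ⊗ₜ 1))) i)
    have hy : y ∈ Subalgebra.center L B := Subalgebra.mem_center_iff.2 fun u =>
      includeRight_injective (FaithfulSMul.algebraMap_injective L A) (by simpa using hz (1 ⊗ₜ u))
    obtain ⟨μ, rfl⟩ := (IsCentral.mem_center_iff L).1 hy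
    exact Algebra.mem_bot.2
      ⟨μ, by simp [Algebra.algebraMap_eq_smul_one, TensorProduct.tmul_smul, one_def]⟩

theorem exists_mem_basis_repr_eq_one [IsSimpleRing A] (I : TwoSidedIdeal (A ⊗[L] B))
    {x : A ⊗[L] B} (hxI : x ∈ I) {i : ι} (hi : (basis A b).repr x i ≠ 0) :
    ∃ x' ∈ I, (basis A b).repr x' i = 1 ∧
      ((basis A b).repr x').support ⊆ ((basis A b).repr x).support := by
  classical
  let J : TwoSidedIdeal A := .mk'
    {a | ∃ x' ∈ I, (basis A b).repr x' i = a ∧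
      ((basis A b).repr x').support ⊆ ((basis A b).repr x).support}
    ⟨0, I.zero_mem, by simp, by simp⟩
    (by
      rintro _ _ ⟨x', hx'I, rfl, hx'⟩ ⟨x'', hx''I, rfl, hx''⟩
      exact ⟨x' + x'', I.add_mem hx'I hx''I, by simp,
        by simpa using Finsupp.support_add.trans (Finset.union_subset hx' hx'')⟩)
    (by
      rintro _ ⟨x', hx'I, rfl, hx'⟩
      exact ⟨-x', I.neg_mem hx'I, by simp, by simpa using hx'⟩)
    (by
      rintro a _ ⟨x', hx'I, rfl, hx'⟩
      exact ⟨(a ⊗ₜ 1) * x', I.mul_mem_left _ _ hx'I, by simp [basis_repr_tmul_one_mul],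
        by simpa [basis_repr_tmul_one_mul] using Finsupp.support_smul.trans hx'⟩)
    (by
      rintro _ a ⟨x', hx'I, rfl, hx'⟩
      refine ⟨x' * (a ⊗ₜ 1), I.mul_mem_right _ _ hx'I, basis_repr_mul_tmul_one b a x' i,
        fun j hj => hx' ?_⟩
      simp only [Finsupp.mem_support_iff, basis_repr_mul_tmul_one] at hj ⊢
      exact left_ne_zero_of_mul hj)
  have h1 := IsSimpleRing.one_mem_of_ne_zero_mem J hi
    ((TwoSidedIdeal.mem_mk' ..).2 ⟨x, hxI, rfl, subset_rfl⟩)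
  rwa [TwoSidedIdeal.mem_mk'] at h1

theorem exists_one_tmul_mem_of_ne_zero [IsCentral L A] [IsSimpleRing A]
    (I : TwoSidedIdeal (A ⊗[L] B)) {x : A ⊗[L] B} (hxI : x ∈ I) (hx : x ≠ 0) :
    ∃ y ≠ 0, (1 : A) ⊗ₜ[L] y ∈ I := by
  let b := Basis.ofVectorSpace L B
  induction hn : ((basis A b).repr x).support.card using Nat.strong_induction_on
    generalizing x with
  | _ n ih =>
  obtain ⟨i, hi⟩ := Finsupp.ne_iff.1 ((basis A b).repr.map_ne_zero_iff.2 hx)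
  obtain ⟨x₁, hx₁I, hx₁i, hx₁⟩ := exists_mem_basis_repr_eq_one b I hxI hi
  by_cases hcomm : ∀ a : A, (a ⊗ₜ 1) * x₁ = x₁ * (a ⊗ₜ 1)
  · obtain ⟨y, rfl⟩ := exists_eq_one_tmul_of_basis_repr_mem_center b x₁ fun j =>
      Subalgebra.mem_center_iff.2 fun a => by
        simpa [basis_repr_tmul_one_mul, basis_repr_mul_tmul_one] using
          congr(((basis A b).repr $(hcomm a)) j)
    exact ⟨y, by rintro rfl; simp at hx₁i, hx₁I⟩
  obtain ⟨a, ha⟩ := not_forall.1 hcomm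
  have hcoord : ∀ j, (basis A b).repr ((a ⊗ₜ 1) * x₁ - x₁ * (a ⊗ₜ 1)) j =
      a * (basis A b).repr x₁ j - (basis A b).repr x₁ j * a := fun j => by
    simp [basis_repr_tmul_one_mul, basis_repr_mul_tmul_one]
  refine ih _ ?_ (I.sub_mem (I.mul_mem_left _ _ hx₁I) (I.mul_mem_right _ _ hx₁I))
    (sub_ne_zero.2 ha) rfl
  rw [← hn]
  refine Finset.card_lt_card ((Finset.ssubset_iff_of_subset ?_).2 ⟨i, ?_, ?_⟩)
  · refine fun j hj => hx₁ ?_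
    simp only [Finsupp.mem_support_iff, hcoord] at hj ⊢
    rintro h
    simp [h] at hj
  · exact Finsupp.mem_support_iff.2 hi
  · rw [Finsupp.mem_support_iff, hcoord, hx₁i, mul_one, one_mul, sub_self, not_not]

instance _root_.IsSimpleRing.tensorProduct [IsCentral L A] [IsSimpleRing A] [IsSimpleRing B] :
    IsSimpleRing (A ⊗[L] B) := by
  refine .of_eq_bot_or_eq_top fun I => or_iff_not_imp_left.2 fun hI => ?_
  obtain ⟨x, hxI, hx : x ≠ 0⟩ := SetLike.exists_of_lt (bot_lt_iff_ne_bot.2 hI)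
  obtain ⟨y, hy, hyI⟩ := exists_one_tmul_mem_of_ne_zero I hxI hx
  have := IsSimpleRing.one_mem_of_ne_zero_mem (TwoSidedIdeal.comap includeRight I) hy
    (TwoSidedIdeal.mem_comap _ |>.2 hyI)
  rw [← I.one_mem_iff]
  simpa [TwoSidedIdeal.mem_comap, ← one_def] using this

end Algebra.TensorProduct

namespace RingEquiv

variable {L A B : Type*} [Field L] [Ring A] [Ring B] [Algebra L A] [Algebra L B]
  {σ : L ≃+* L} (e : B ≃+* A)

theorem map_algebraMap_of_map_smul (he : ∀ (μ : L) (x : B), e (μ • x) = σ μ • e x) (μ : L) :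
    e (algebraMap L B μ) = algebraMap L A (σ μ) := by
  rw [Algebra.algebraMap_eq_smul_one, he, map_one, Algebra.algebraMap_eq_smul_one]

theorem isCentral_of_map_smul (he : ∀ (μ : L) (x : B), e (μ • x) = σ μ • e x)
    [Algebra.IsCentral L A] : Algebra.IsCentral L B where
  out z hz := by
    have hzA : e z ∈ Subalgebra.center L A := Subalgebra.mem_center_iff.2 fun a => by
      rw [← e.apply_symm_apply a, ← map_mul, ← map_mul, Subalgebra.mem_center_iff.1 hz]
    obtain ⟨μ, hμ⟩ := (Algebra.IsCentral.mem_center_iff L).1 hzA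
    refine Algebra.mem_bot.2 ⟨σ.symm μ, e.injective ?_⟩
    rw [map_algebraMap_of_map_smul e he, σ.apply_symm_apply, hμ]

end RingEquiv

namespace TwistedSwap

variable {K L A B : Type*} [Field K] [Field L] [Algebra K L] [Ring A] [Ring B]
  [Algebra L A] [Algebra L B] [Algebra K A] [IsScalarTower K L A]
  {e : B ≃+* A} {s : A ⊗[L] B →ₗ[K] A ⊗[L] B}

theorem map_mul (hs : ∀ (x : A) (y : B), s (x ⊗ₜ[L] y) = e y ⊗ₜ[L] e.symm x)
    (u v : A ⊗[L] B) : s (u * v) = s u * s v := by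
  induction u using TensorProduct.induction_on with
  | zero => simp
  | add u₁ u₂ h₁ h₂ => rw [add_mul, map_add, h₁, h₂, map_add, add_mul]
  | tmul x y =>
    induction v using TensorProduct.induction_on with
    | zero => simp
    | add v₁ v₂ h₁ h₂ => rw [mul_add, map_add, h₁, h₂, map_add, mul_add]
    | tmul x' y' => simp [hs]

theorem map_one (hs : ∀ (x : A) (y : B), s (x ⊗ₜ[L] y) = e y ⊗ₜ[L] e.symm x) : s 1 = 1 := by
  simp [Algebra.TensorProduct.one_def, hs]

theorem apply_apply (hs : ∀ (x : A) (y : B), s (x ⊗ₜ[L] y) = e y ⊗ₜ[L] e.symm x)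
    (u : A ⊗[L] B) : s (s u) = u := by
  induction u using TensorProduct.induction_on with
  | zero => simp
  | add u v hu hv => rw [map_add, map_add, hu, hv]
  | tmul x y => simp [hs]

theorem map_smul {σ : L ≃ₐ[K] L} (he : ∀ (μ : L) (x : A), e.symm (μ • x) = σ μ • e.symm x)
    (hs : ∀ (x : A) (y : B), s (x ⊗ₜ[L] y) = e y ⊗ₜ[L] e.symm x) (μ : L) (u : A ⊗[L] B) :
    s (μ • u) = σ μ • s u := by
  induction u using TensorProduct.induction_on with
  | zero => simp
  | add u v hu hv => rw [smul_add, map_add, hu, hv, map_add, smul_add]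
  | tmul x y => rw [TensorProduct.smul_tmul', hs, hs, he, TensorProduct.tmul_smul]

end TwistedSwap

namespace AlgHom

variable {K L T : Type*} [Field K] [Field L] [Algebra K L] [Ring T] [Algebra L T] [Algebra K T]
  {σ : L ≃ₐ[K] L} {s : T →ₐ[K] T}

theorem add_apply_mem_equalizer (hss : ∀ t, s (s t) = t) (t : T) :
    t + s t ∈ s.equalizer (AlgHom.id K T) := by
  rw [mem_equalizer, map_add, hss, add_comm, id_apply]

theorem span_equalizer_eq_top (hσ : σ ≠ 1) (hs : ∀ (μ : L) t, s (μ • t) = σ μ • s t)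
    (hss : ∀ t, s (s t) = t) : Submodule.span L (s.equalizer (AlgHom.id K T) : Set T) = ⊤ := by
  obtain ⟨l, hl⟩ := DFunLike.ne_iff.1 hσ
  have hδ : l - σ l ≠ 0 := sub_ne_zero.2 (Ne.symm hl)
  refine eq_top_iff.2 fun t _ => ?_
  have ht : (l - σ l) • t = (l • t + s (l • t)) - σ l • (t + s t) := by
    rw [hs, sub_smul, smul_add]
    abel
  rw [← inv_smul_smul₀ hδ t, ht]
  exact Submodule.smul_mem _ _ <| Submodule.sub_mem _
    (Submodule.subset_span (add_apply_mem_equalizer hss _))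
    (Submodule.smul_mem _ _ (Submodule.subset_span (add_apply_mem_equalizer hss _)))

theorem one_mem_span_of_ne_bot (hσ : σ ≠ 1) (hs : ∀ (μ : L) t, s (μ • t) = σ μ • s t)
    (hss : ∀ t, s (s t) = t) [IsSimpleRing T] {I : TwoSidedIdeal (s.equalizer (AlgHom.id K T))}
    (hI : I ≠ ⊥) :
    (1 : T) ∈ Submodule.span L (Subtype.val '' (I : Set (s.equalizer (AlgHom.id K T)))) := by
  let C := s.equalizer (AlgHom.id K T)
  let M := Submodule.span L (Subtype.val '' (I : Set C))
  have hCI : (C : Set T) * Subtype.val '' (I : Set C) ⊆ Subtype.val '' (I : Set C) := by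
    rintro _ ⟨_, hd, _, ⟨c, hc, rfl⟩, rfl⟩
    exact ⟨⟨_, hd⟩ * c, I.mul_mem_left _ _ hc, rfl⟩
  have hIC : Subtype.val '' (I : Set C) * (C : Set T) ⊆ Subtype.val '' (I : Set C) := by
    rintro _ ⟨_, ⟨c, hc, rfl⟩, _, hd, rfl⟩
    exact ⟨c * ⟨_, hd⟩, I.mul_mem_right _ _ hc, rfl⟩
  have hT (t : T) : t ∈ Submodule.span L (C : Set T) :=
    span_equalizer_eq_top hσ hs hss ▸ Submodule.mem_top
  let J : TwoSidedIdeal T := .mk' M M.zero_mem M.add_mem M.neg_mem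
    (fun {t _} hm => Submodule.span_mono hCI <|
      Submodule.span_mul_span L (C : Set T) _ ▸ Submodule.mul_mem_mul (hT t) hm)
    (fun {_ t} hm => Submodule.span_mono hIC <|
      Submodule.span_mul_span L _ (C : Set T) ▸ Submodule.mul_mem_mul hm (hT t))
  obtain ⟨c, hcI, hc : c ≠ 0⟩ := SetLike.exists_of_lt (bot_lt_iff_ne_bot.2 hI)
  have h1 := IsSimpleRing.one_mem_of_ne_zero_mem J (x := c) (fun h => hc (Subtype.ext h))
    ((TwoSidedIdeal.mem_mk' ..).2 (Submodule.subset_span ⟨c, hcI, rfl⟩))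
  rwa [TwoSidedIdeal.mem_mk'] at h1

variable [IsScalarTower K L T]

theorem finrank_equalizer (hdim : finrank K L = 2) (hσ : σ ≠ 1)
    (hs : ∀ (μ : L) t, s (μ • t) = σ μ • s t) (hss : ∀ t, s (s t) = t) [FiniteDimensional L T] :
    finrank K (s.equalizer (AlgHom.id K T)) = finrank L T := by
  set C := s.equalizer (AlgHom.id K T)
  have : FiniteDimensional K L := Module.finite_of_finrank_eq_succ hdim
  have : FiniteDimensional K T := Module.Finite.trans L T
  obtain ⟨l, hl⟩ := DFunLike.ne_iff.1 hσ
  have hδ : l - σ l ≠ 0 := sub_ne_zero.2 (Ne.symm hl)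
  let g : C × C →ₗ[K] T :=
    C.val.toLinearMap.coprod (((LinearMap.lsmul L T l).restrictScalars K).comp C.val.toLinearMap)
  have hg : Function.Injective g := by
    rw [← LinearMap.ker_eq_bot, LinearMap.ker_eq_bot']
    rintro ⟨c₁, c₂⟩ h
    replace h : (c₁ : T) + l • (c₂ : T) = 0 := h
    have hs' : (c₁ : T) + σ l • (c₂ : T) = 0 := by
      simpa [hs, (mem_equalizer _ _ _).1 c₁.2, (mem_equalizer _ _ _).1 c₂.2] using congr(s $h)
    have h₂ : (c₂ : T) = 0 := by
      have : (l - σ l) • (c₂ : T) = 0 := by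
        rw [sub_smul]
        linear_combination (norm := module) h - hs'
      exact (smul_eq_zero.1 this).resolve_left hδ
    have h₁ : (c₁ : T) = 0 := by simpa [h₂] using h
    exact Prod.ext (Subtype.ext h₁) (Subtype.ext h₂)
  let φ : L ⊗[K] C →ₗ[L] T := C.val.toLinearMap.liftBaseChange L
  have hφ : LinearMap.range φ = ⊤ := by
    rw [eq_top_iff, ← span_equalizer_eq_top hσ hs hss, Submodule.span_le]
    exact fun c hc => ⟨1 ⊗ₜ ⟨c, hc⟩, by simp [φ]⟩
  have h₁ := LinearMap.finrank_le_finrank_of_injective hg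
  have h₂ := LinearMap.finrank_range_le φ
  rw [Module.finrank_prod, ← Module.finrank_mul_finrank K L T, hdim] at h₁
  rw [hφ, finrank_top, Module.finrank_baseChange] at h₂
  omega

theorem isCentral_equalizer (hdim : finrank K L = 2) (hσ : σ ≠ 1)
    (hs : ∀ (μ : L) t, s (μ • t) = σ μ • s t) (hss : ∀ t, s (s t) = t)
    [Nontrivial T] [Algebra.IsCentral L T] : Algebra.IsCentral K (s.equalizer (AlgHom.id K T)) where
  out z hz := by
    have hzT : (z : T) ∈ Subalgebra.center L T := Subalgebra.mem_center_iff.2 fun t => by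
      have ht : t ∈ Submodule.span L (s.equalizer (AlgHom.id K T) : Set T) := by
        rw [span_equalizer_eq_top hσ hs hss]; trivial
      induction ht using Submodule.span_induction with
      | mem t ht => exact congr(Subtype.val $(Subalgebra.mem_center_iff.1 hz ⟨t, ht⟩))
      | zero => simp
      | add t t' _ _ h h' => rw [add_mul, mul_add, h, h']
      | smul μ t _ h => rw [smul_mul_assoc, mul_smul_comm, h]
    obtain ⟨μ, hμ⟩ := (Algebra.IsCentral.mem_center_iff L).1 hzT
    have hσμ : σ μ = μ := by
      refine FaithfulSMul.algebraMap_injective L T ?_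
      have := (mem_equalizer _ _ _).1 z.2
      rw [hμ, Algebra.algebraMap_eq_smul_one, hs, map_one] at this
      rwa [Algebra.algebraMap_eq_smul_one, Algebra.algebraMap_eq_smul_one]
    obtain ⟨k, rfl⟩ := IntermediateField.mem_bot.1 (AlgEquiv.mem_bot_of_apply_eq_self hdim hσ hσμ)
    exact Algebra.mem_bot.2 ⟨k, Subtype.ext (by simp [hμ, IsScalarTower.algebraMap_apply K L T])⟩

theorem exists_mem_eq_add_apply_of_mem_span (hdim : finrank K L = 2) (hσ : σ ≠ 1)
    (hs : ∀ (μ : L) t, s (μ • t) = σ μ • s t) (I : TwoSidedIdeal (s.equalizer (AlgHom.id K T)))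
    {m : T} (hm : m ∈ Submodule.span L (Subtype.val '' (I : Set (s.equalizer (AlgHom.id K T)))))
    (μ : L) : ∃ c ∈ I, (c : T) = μ • m + s (μ • m) := by
  induction hm using Submodule.span_induction generalizing μ with
  | mem _ h =>
    obtain ⟨c, hc, rfl⟩ := h
    obtain ⟨k, hk⟩ := AlgEquiv.exists_algebraMap_eq_add_apply hdim hσ μ
    refine ⟨k • c, by rw [Algebra.smul_def]; exact I.mul_mem_left _ _ hc, ?_⟩
    rw [hs, (mem_equalizer _ _ _).1 c.2, id_apply, ← add_smul, ← hk, algebraMap_smul]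
    rfl
  | zero => exact ⟨0, I.zero_mem, by simp⟩
  | add x y _ _ hx hy =>
    obtain ⟨a, ha, ha'⟩ := hx μ
    obtain ⟨b, hb, hb'⟩ := hy μ
    refine ⟨a + b, I.add_mem ha hb, ?_⟩
    rw [Subalgebra.coe_add, ha', hb', smul_add, map_add]
    abel
  | smul ν x _ h =>
    obtain ⟨c, hc, hcx⟩ := h (μ * ν)
    exact ⟨c, hc, by rw [hcx, smul_smul]⟩

theorem isSimpleRing_equalizer (hdim : finrank K L = 2) (hσ : σ ≠ 1)
    (hs : ∀ (μ : L) t, s (μ • t) = σ μ • s t) (hss : ∀ t, s (s t) = t) [IsSimpleRing T] :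
    IsSimpleRing (s.equalizer (AlgHom.id K T)) := by
  set C := s.equalizer (AlgHom.id K T)
  refine .of_eq_bot_or_eq_top fun I => or_iff_not_imp_left.2 fun hI => ?_
  obtain ⟨μ, hμ⟩ := AlgEquiv.exists_add_apply_ne_zero hσ
  obtain ⟨k, hk⟩ := AlgEquiv.exists_algebraMap_eq_add_apply hdim hσ μ
  obtain ⟨c, hcI, hcμ⟩ :=
    exists_mem_eq_add_apply_of_mem_span hdim hσ hs I (one_mem_span_of_ne_bot hσ hs hss hI) μ
  have hck : c = algebraMap K C k := Subtype.ext <| by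
    rw [hcμ, hs, map_one, ← add_smul, ← hk, algebraMap_smul, Algebra.algebraMap_eq_smul_one]
    rfl
  have hk0 : k ≠ 0 := by
    rintro rfl
    exact hμ (by rw [← hk, map_zero])
  rw [← I.one_mem_iff]
  simpa [hck, ← map_mul, inv_mul_cancel₀ hk0] using I.mul_mem_left (algebraMap K C k⁻¹) _ hcI

end AlgHom

theorem stmt17_general (K L : Type*) [Field K] [Field L] [Algebra K L]
    (hdim : Module.finrank K L = 2)
    (σ : L ≃ₐ[K] L) (hσ : ∃ l, σ l ≠ l)
    (A B : Type*) [Ring A] [Ring B] [Algebra L A] [Algebra L B]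
    [Algebra K A] [IsScalarTower K L A]
    [Algebra.IsCentral L A] [IsSimpleRing A] [FiniteDimensional L A]
    (e : B ≃+* A) (he : ∀ (l : L) (x : B), e (l • x) = σ l • e x)
    (s : A ⊗[L] B →ₗ[K] A ⊗[L] B)
    (hs : ∀ (x : A) (y : B), s (x ⊗ₜ[L] y) = e y ⊗ₜ[L] e.symm x) :
    (∀ u v : A ⊗[L] B, s (u * v) = s u * s v) ∧ s 1 = 1 ∧
    (∀ u : A ⊗[L] B, s (s u) = u) ∧
    ∃ C : Subalgebra K (A ⊗[L] B),
      (∀ u, u ∈ C ↔ s u = u) ∧ Algebra.IsCentral K C ∧ IsSimpleRing C ∧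
      Module.finrank K C = (Module.finrank L A)^2 := by
  have hσ1 : σ ≠ 1 := fun h => hσ.elim fun l hl => hl (by rw [h]; rfl)
  have he_symm (μ : L) (x : A) : e.symm (μ • x) = σ μ • e.symm x := by
    rw [e.symm_apply_eq, he, AlgEquiv.apply_apply_of_finrank_eq_two hdim, e.apply_symm_apply]
  have : IsSimpleRing B := .of_ringEquiv e.symm ‹_›
  have : Algebra.IsCentral L B := RingEquiv.isCentral_of_map_smul (σ := σ) e he
  have hrank : finrank L B = finrank L A := Algebra.finrank_eq_of_equiv_equiv (σ : L ≃+* L) e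
    (RingHom.ext fun μ => (RingEquiv.map_algebraMap_of_map_smul (σ := σ) e he μ).symm)
  have : FiniteDimensional L B := Module.finite_of_finrank_pos (hrank ▸ finrank_pos)
  let S : A ⊗[L] B →ₐ[K] A ⊗[L] B :=
    .ofLinearMap s (TwistedSwap.map_one hs) (TwistedSwap.map_mul hs)
  have hSσ : ∀ (μ : L) t, S (μ • t) = σ μ • S t := TwistedSwap.map_smul he_symm hs
  have hSS : ∀ t, S (S t) = t := TwistedSwap.apply_apply hs
  refine ⟨TwistedSwap.map_mul hs, TwistedSwap.map_one hs, hSS, S.equalizer (AlgHom.id K _),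
    S.mem_equalizer _, S.isCentral_equalizer hdim hσ1 hSσ hSS,
    S.isSimpleRing_equalizer hdim hσ1 hSσ hSS, ?_⟩
  rw [S.finrank_equalizer hdim hσ1 hSσ hSS, Module.finrank_tensorProduct, hrank, sq]

/-- Let `L/K` be a separable quadratic extension with nontrivial automorphism `σ`, `A` a
central simple `L`-algebra and `B = A^σ` its `σ`-twist (same ring, `L` acting through
`σ`, identified with `A` via the ring isomorphism `e`). The switch map `s` on
`A ⊗_L A^σ`, given by `s(a ⊗ b^σ) = b ⊗ a^σ`, is a `K`-algebra automorphism of order 2,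
and its fixed subalgebra is a central simple `K`-algebra of dimension `(dim_L A)²`
over `K`. -/
theorem stmt17 (K L : Type*) [Field K] [Field L] [Algebra K L]
    [Algebra.IsSeparable K L] (hdim : Module.finrank K L = 2)
    (σ : L ≃ₐ[K] L) (hσ : ∃ l, σ l ≠ l)
    (A B : Type*) [Ring A] [Ring B] [Algebra L A] [Algebra L B]
    [Algebra K A] [Algebra K B] [IsScalarTower K L A] [IsScalarTower K L B]
    [Algebra.IsCentral L A] [IsSimpleRing A] [FiniteDimensional L A]
    (e : B ≃+* A) (he : ∀ (l : L) (x : B), e (l • x) = σ l • e x)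
    (s : A ⊗[L] B →ₗ[K] A ⊗[L] B)
    (hs : ∀ (x : A) (y : B), s (x ⊗ₜ[L] y) = e y ⊗ₜ[L] e.symm x) :
    (∀ u v : A ⊗[L] B, s (u * v) = s u * s v) ∧ s 1 = 1 ∧
    (∀ u : A ⊗[L] B, s (s u) = u) ∧
    ∃ C : Subalgebra K (A ⊗[L] B),
      (∀ u, u ∈ C ↔ s u = u) ∧ Algebra.IsCentral K C ∧ IsSimpleRing C ∧
      Module.finrank K C = (Module.finrank L A)^2 :=
  stmt17_general K L hdim σ hσ A B e he s hs
end

section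
/- Let L/K be a separable quadratic extension with Gal(L/K) = {1, σ}, and let A be a central simple L-algebra of dimension n² over L. Suppose I is a right ideal of the corestriction B = Cor_{L/K}(A) ⊆ A^σ ⊗_L A such that A^σ ⊗_L A = I_L ⊕ (1 ⊗ A) as L-vector spaces, where I_L = I ⊗_K L is the L-span of I inside A^σ ⊗_L A. Then the map τ_I : A → A defined by the condition a^σ ⊗ 1 − 1 ⊗ τ_I(a) ∈ I_L is a well-defined involution of the second kind on A (i.e., a K-linear anti-automorphism of order 2 restricting to σ on the center L). -/
/-!
Write `s` for the switch map. It is `σ`-semilinear and involutive, so as soon as `σ l ≠ l`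
every `u` is an `L`-combination of the `s`-fixed vectors `u + s u` and `l • u + s (l • u)`:
`Cor` spans `A^σ ⊗ A` over `L`. Hence `I_L` is a right ideal of `A^σ ⊗ A`, and it is
`s`-stable since `I ⊆ Cor`. The complement `1 ⊗ A` makes `τ_I` well defined, and then
* `(a^σ ⊗ 1 - 1 ⊗ τ a)(b^σ ⊗ 1) + (b^σ ⊗ 1 - 1 ⊗ τ b)(1 ⊗ τ a) = (ab)^σ ⊗ 1 - 1 ⊗ τ b τ a`
  gives `τ (a b) = τ b τ a`;
* applying `s` to `a^σ ⊗ 1 - 1 ⊗ τ a` gives `τ (τ a) = a`;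
* `l^σ ⊗ 1 = s (1 ⊗ l) = s (l ⊗ 1) = 1 ⊗ σ l` gives `τ l = σ l`.
-/

open scoped TensorProduct

open Submodule Algebra.TensorProduct

section Complement

variable {R E F : Type*} [Ring R] [AddCommGroup E] [Module R E] [AddCommGroup F] [Module R F]
  {M : Submodule R E} {f : F →ₗ[R] E}

theorem Submodule.exists_sub_mem_of_codisjoint_range (h : Codisjoint M (LinearMap.range f))
    (v : E) : ∃ x, v - f x ∈ M := by
  obtain ⟨m, hm, _, ⟨x, rfl⟩, rfl⟩ :=
    mem_sup.1 (h.eq_top ▸ mem_top : v ∈ M ⊔ LinearMap.range f)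
  exact ⟨x, by simpa using hm⟩

theorem Submodule.eq_of_sub_mem_of_disjoint_range (hf : Function.Injective f)
    (h : Disjoint M (LinearMap.range f)) {v : E} {x y : F} (hx : v - f x ∈ M)
    (hy : v - f y ∈ M) : x = y := by
  have hM : f (x - y) ∈ M := by simpa [map_sub] using M.sub_mem hy hx
  exact sub_eq_zero.1 <| hf <| by
    rw [map_zero]; exact disjoint_def.1 h _ hM ⟨x - y, rfl⟩

end Complement

theorem Submodule.map_mem_span_of_forall_eq {L V : Type*} [Semiring L] [AddCommMonoid V]
    [Module L V] {F : Type*} [FunLike F V V] [AddMonoidHomClass F V V] {s : F} {σ : L → L}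
    (hsσ : ∀ (l : L) v, s (l • v) = σ l • s v)
    {I : Set V} (hI : ∀ u ∈ I, s u = u) {u : V} (hu : u ∈ span L I) : s u ∈ span L I := by
  induction hu using span_induction with
  | mem u hu => rw [hI u hu]; exact subset_span hu
  | zero => simp
  | add x y _ _ hx hy => rw [map_add]; exact add_mem hx hy
  | smul l x _ hx => rw [hsσ]; exact smul_mem _ _ hx

theorem Submodule.span_setOf_fixed_eq_top {L V : Type*} [Field L] [AddCommGroup V] [Module L V]
    {F : Type*} [FunLike F V V] [AddMonoidHomClass F V V] {s : F} {σ : L → L}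
    (hs : ∀ v, s (s v) = v) (hsσ : ∀ (l : L) v, s (l • v) = σ l • s v)
    (hσ : ∃ l, σ l ≠ l) :
    span L {v | s v = v} = ⊤ := by
  obtain ⟨l, hl⟩ := hσ
  refine eq_top_iff.2 fun u _ => ?_
  have fixed (w : V) : w + s w ∈ span L {v | s v = v} :=
    subset_span (show s (w + s w) = w + s w by rw [map_add, hs, add_comm])
  have key : (l - σ l) • u = (l • u + s (l • u)) - σ l • (u + s u) := by
    rw [hsσ, smul_add, sub_smul]; abel
  have hu : (l - σ l) • u ∈ span L {v | s v = v} :=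
    key ▸ sub_mem (fixed _) (smul_mem _ _ (fixed u))
  simpa [smul_smul, inv_mul_cancel₀ (sub_ne_zero.2 hl.symm)] using smul_mem _ (l - σ l)⁻¹ hu

theorem Submodule.mul_mem_span_of_span_eq_top {L R : Type*} [CommSemiring L] [Semiring R]
    [Algebra L R] {I C : Set R} (hC : span L C = ⊤) (hIC : ∀ u ∈ I, ∀ c ∈ C, u * c ∈ I)
    {u : R} (hu : u ∈ span L I) (v : R) : u * v ∈ span L I := by
  have hle : span L I * span L C ≤ span L I := by
    rw [span_mul_span]
    exact span_le.2 <| by rintro _ ⟨i, hi, c, hc, rfl⟩; exact subset_span (hIC i hi c hc)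
  exact hle (mul_mem_mul hu (hC ▸ mem_top))

section Switch

variable {L A B : Type*} [CommSemiring L] [Semiring A] [Semiring B] [Algebra L A] [Algebra L B]
  {e : B ≃+* A} {F : Type*} [FunLike F (B ⊗[L] A) (B ⊗[L] A)] {s : F} {σ : L → L}

theorem switch_switch [AddMonoidHomClass F (B ⊗[L] A) (B ⊗[L] A)]
    (hs : ∀ x y, s (x ⊗ₜ[L] y) = e.symm y ⊗ₜ[L] e x) (u : B ⊗[L] A) : s (s u) = u := by
  induction u using TensorProduct.induction_on with
  | zero => simp
  | tmul x y => simp [hs]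
  | add x y hx hy => simp [hx, hy]

theorem switch_smul [AddMonoidHomClass F (B ⊗[L] A) (B ⊗[L] A)]
    (he : ∀ (l : L) x, e (l • x) = σ l • e x)
    (hs : ∀ x y, s (x ⊗ₜ[L] y) = e.symm y ⊗ₜ[L] e x)
    (l : L) (u : B ⊗[L] A) : s (l • u) = σ l • s u := by
  induction u using TensorProduct.induction_on with
  | zero => simp
  | tmul x y => rw [TensorProduct.smul_tmul', hs, hs, he, TensorProduct.tmul_smul]
  | add x y hx hy => rw [smul_add, map_add, hx, hy, map_add, smul_add]

theorem symm_algebraMap_tmul_one (he : ∀ (l : L) x, e (l • x) = σ l • e x)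
    (hs : ∀ x y, s (x ⊗ₜ[L] y) = e.symm y ⊗ₜ[L] e x) (l : L) :
    e.symm (algebraMap L A l) ⊗ₜ[L] (1 : A) = (1 : B) ⊗ₜ[L] algebraMap L A (σ l) := by
  calc e.symm (algebraMap L A l) ⊗ₜ[L] (1 : A)
      = s ((1 : B) ⊗ₜ[L] algebraMap L A l) := by rw [hs, map_one]
    _ = s (algebraMap L B l ⊗ₜ[L] (1 : A)) := by rw [tmul_one_eq_one_tmul]
    _ = (1 : B) ⊗ₜ[L] algebraMap L A (σ l) := by
      rw [hs, map_one, Algebra.algebraMap_eq_smul_one, he, map_one,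
        ← Algebra.algebraMap_eq_smul_one]

end Switch

section TauRel

variable {L A B : Type*} [Field L] [Ring A] [Ring B] [Algebra L A] [Algebra L B]
  {e : B ≃+* A} {M : Submodule L (B ⊗[L] A)}

variable (e M) in
/-- Here `e.symm a` stands for `a^σ`, so for `M = I_L` this says `x = τ_I a`. -/
def TauRel (a x : A) : Prop :=
  e.symm a ⊗ₜ[L] (1 : A) - (1 : B) ⊗ₜ[L] x ∈ M

theorem exists_tauRel
    (h : Codisjoint M (LinearMap.range (includeRight : A →ₐ[L] B ⊗[L] A).toLinearMap))
    (a : A) : ∃ x, TauRel e M a x :=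
  exists_sub_mem_of_codisjoint_range h _

theorem TauRel.unique [Nontrivial B]
    (h : Disjoint M (LinearMap.range (includeRight : A →ₐ[L] B ⊗[L] A).toLinearMap))
    {a x y : A} (hx : TauRel e M a x) (hy : TauRel e M a y) : x = y :=
  eq_of_sub_mem_of_disjoint_range (includeRight_injective (algebraMap L B).injective) h hx hy

theorem TauRel.add {a b x y : A} (hx : TauRel e M a x) (hy : TauRel e M b y) :
    TauRel e M (a + b) (x + y) := by
  unfold TauRel at *
  convert M.add_mem hx hy using 1
  rw [map_add, TensorProduct.add_tmul, TensorProduct.tmul_add]; abel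

theorem TauRel.mul (hM : ∀ u ∈ M, ∀ v, u * v ∈ M) {a b x y : A} (hx : TauRel e M a x)
    (hy : TauRel e M b y) : TauRel e M (a * b) (y * x) := by
  unfold TauRel at *
  convert M.add_mem (hM _ hx (e.symm b ⊗ₜ[L] 1)) (hM _ hy ((1 : B) ⊗ₜ[L] x)) using 1
  simp only [sub_mul, map_mul, Algebra.TensorProduct.tmul_mul_tmul, one_mul, mul_one]
  abel

theorem TauRel.symm {F : Type*} [FunLike F (B ⊗[L] A) (B ⊗[L] A)]
    [AddMonoidHomClass F (B ⊗[L] A) (B ⊗[L] A)] {s : F}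
    (hs : ∀ x y, s (x ⊗ₜ[L] y) = e.symm y ⊗ₜ[L] e x) (hsM : ∀ u ∈ M, s u ∈ M)
    {a x : A} (h : TauRel e M a x) : TauRel e M x a := by
  have := M.neg_mem (hsM _ h)
  rwa [map_sub, hs, hs, map_one, map_one, e.apply_symm_apply, neg_sub] at this

theorem tauRel_algebraMap {F : Type*} [FunLike F (B ⊗[L] A) (B ⊗[L] A)] {s : F} {σ : L → L}
    (he : ∀ (l : L) x, e (l • x) = σ l • e x)
    (hs : ∀ x y, s (x ⊗ₜ[L] y) = e.symm y ⊗ₜ[L] e x)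
    (l : L) : TauRel e M (algebraMap L A l) (algebraMap L A (σ l)) := by
  rw [TauRel, symm_algebraMap_tmul_one he hs, sub_self]
  exact M.zero_mem

end TauRel

theorem stmt18_general (K L : Type*) [Field K] [Field L] [Algebra K L]
    (σ : L ≃ₐ[K] L) (hσ : ∃ l, σ l ≠ l)
    (A B : Type*) [Ring A] [Ring B] [Algebra L A] [Algebra L B]
    [Algebra K B] [IsScalarTower K L B] [IsSimpleRing A]
    (e : B ≃+* A) (he : ∀ (l : L) (x : B), e (l • x) = σ l • e x)
    (s : B ⊗[L] A →ₗ[K] B ⊗[L] A)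
    (hs : ∀ (x : B) (y : A), s (x ⊗ₜ[L] y) = e.symm y ⊗ₜ[L] e x)
    (Cor : Subalgebra K (B ⊗[L] A)) (hCor : ∀ u, u ∈ Cor ↔ s u = u)
    (I : Submodule K (B ⊗[L] A)) (hIC : I ≤ Subalgebra.toSubmodule Cor)
    (hIright : ∀ u ∈ I, ∀ c ∈ Cor, u * c ∈ I)
    (hinf : Submodule.span L (I : Set (B ⊗[L] A)) ⊓
        LinearMap.range (Algebra.TensorProduct.includeRight :
          A →ₐ[L] B ⊗[L] A).toLinearMap = ⊥)
    (hsup : Submodule.span L (I : Set (B ⊗[L] A)) ⊔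
        LinearMap.range (Algebra.TensorProduct.includeRight :
          A →ₐ[L] B ⊗[L] A).toLinearMap = ⊤) :
    ∃ τ : A → A,
      (∀ a : A, (e.symm a ⊗ₜ[L] (1 : A)) - ((1 : B) ⊗ₜ[L] τ a)
          ∈ Submodule.span L (I : Set (B ⊗[L] A))) ∧
      (∀ a x : A, (e.symm a ⊗ₜ[L] (1 : A)) - ((1 : B) ⊗ₜ[L] x)
          ∈ Submodule.span L (I : Set (B ⊗[L] A)) → x = τ a) ∧
      (∀ x y : A, τ (x + y) = τ x + τ y) ∧
      (∀ x y : A, τ (x * y) = τ y * τ x) ∧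
      (∀ x : A, τ (τ x) = x) ∧
      (∀ l : L, τ (algebraMap L A l) = algebraMap L A (σ l)) := by
  have : Nontrivial B := e.toEquiv.nontrivial
  set M := Submodule.span L (I : Set (B ⊗[L] A))
  have hCorSpan : span L (Cor : Set (B ⊗[L] A)) = ⊤ := by
    rw [show (Cor : Set (B ⊗[L] A)) = {u | s u = u} from Set.ext hCor]
    exact span_setOf_fixed_eq_top (switch_switch hs) (switch_smul he hs) hσ
  have hright : ∀ u ∈ M, ∀ v, u * v ∈ M :=
    fun u hu => mul_mem_span_of_span_eq_top hCorSpan hIright hu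
  have hsM : ∀ u ∈ M, s u ∈ M :=
    fun u => map_mem_span_of_forall_eq (switch_smul he hs) fun v hv => (hCor v).1 (hIC hv)
  choose τ hτ using exists_tauRel (codisjoint_iff.2 hsup)
  have hτu (a x : A) (h : TauRel e M a x) : x = τ a := h.unique (disjoint_iff.2 hinf) (hτ a)
  exact ⟨τ, hτ, hτu, fun x y => (hτu _ _ ((hτ x).add (hτ y))).symm,
    fun x y => (hτu _ _ ((hτ x).mul hright (hτ y))).symm,
    fun x => (hτu _ _ ((hτ x).symm hs hsM)).symm,
    fun l => (hτu _ _ (tauRel_algebraMap he hs l)).symm⟩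

/-- Let `L/K` be a separable quadratic extension with nontrivial automorphism `σ`, `A` a
central simple `L`-algebra of dimension `n²`, `B = A^σ` its `σ`-twist (identified with `A`
via the ring isomorphism `e`), `Cor` the corestriction (the fixed subalgebra of the switch
map `s` on `A^σ ⊗_L A`), and `I` a right ideal of `Cor` with
`A^σ ⊗_L A = I_L ⊕ (1 ⊗ A)` where `I_L` is the `L`-span of `I`. Then the condition
`a^σ ⊗ 1 − 1 ⊗ τ(a) ∈ I_L` well-defines a map `τ = τ_I : A → A` which is an involution
of the second kind on `A`. -/
theorem stmt18 (K L : Type*) [Field K] [Field L] [Algebra K L]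
    [Algebra.IsSeparable K L] (hdim : Module.finrank K L = 2)
    (σ : L ≃ₐ[K] L) (hσ : ∃ l, σ l ≠ l)
    (n : ℕ)
    (A B : Type*) [Ring A] [Ring B] [Algebra L A] [Algebra L B]
    [Algebra K A] [Algebra K B] [IsScalarTower K L A] [IsScalarTower K L B]
    [Algebra.IsCentral L A] [IsSimpleRing A] [FiniteDimensional L A]
    (hn : Module.finrank L A = n^2)
    (e : B ≃+* A) (he : ∀ (l : L) (x : B), e (l • x) = σ l • e x)
    (s : B ⊗[L] A →ₗ[K] B ⊗[L] A)
    (hs : ∀ (x : B) (y : A), s (x ⊗ₜ[L] y) = e.symm y ⊗ₜ[L] e x)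
    (Cor : Subalgebra K (B ⊗[L] A)) (hCor : ∀ u, u ∈ Cor ↔ s u = u)
    (I : Submodule K (B ⊗[L] A)) (hIC : I ≤ Subalgebra.toSubmodule Cor)
    (hIright : ∀ u ∈ I, ∀ c ∈ Cor, u * c ∈ I)
    (hinf : Submodule.span L (I : Set (B ⊗[L] A)) ⊓
        LinearMap.range (Algebra.TensorProduct.includeRight :
          A →ₐ[L] B ⊗[L] A).toLinearMap = ⊥)
    (hsup : Submodule.span L (I : Set (B ⊗[L] A)) ⊔
        LinearMap.range (Algebra.TensorProduct.includeRight :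
          A →ₐ[L] B ⊗[L] A).toLinearMap = ⊤) :
    ∃ τ : A → A,
      (∀ a : A, (e.symm a ⊗ₜ[L] (1 : A)) - ((1 : B) ⊗ₜ[L] τ a)
          ∈ Submodule.span L (I : Set (B ⊗[L] A))) ∧
      (∀ a x : A, (e.symm a ⊗ₜ[L] (1 : A)) - ((1 : B) ⊗ₜ[L] x)
          ∈ Submodule.span L (I : Set (B ⊗[L] A)) → x = τ a) ∧
      (∀ x y : A, τ (x + y) = τ x + τ y) ∧
      (∀ x y : A, τ (x * y) = τ y * τ x) ∧
      (∀ x : A, τ (τ x) = x) ∧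
      (∀ l : L, τ (algebraMap L A l) = algebraMap L A (σ l)) :=
  stmt18_general K L σ hσ A B e he s hs Cor hCor I hIC hIright hinf hsup
end

section
/- Let L/K be a separable quadratic extension of fields, A a quaternion algebra over L admitting an involution τ of the second kind, and let ¯ denote the canonical (quaternion conjugation) involution on A. Then the set of fixed points of the composite map a ↦ τ(ā) is a quaternion algebra B over K (a 4-dimensional central simple K-subalgebra of A) with B ⊗_K L ≅ A. -/
/-!
Up to `σ`, the involution `τ` preserves the properties `x + x̄ ∈ L` and `x x̄ ∈ L` that pin down
`x̄ = t - x` for a non-scalar `x`; hence `τ` commutes with `¯`, and `φ = τ ∘ ¯` is a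
`σ`-semilinear `K`-algebra involution of `A`. For `l₀` with `σ l₀ ≠ l₀`, every `a ∈ A` is uniquely
`b₁ + l₀ b₂` with `b₁, b₂` fixed by `φ` (take `b₂ = (l₀ - σ l₀)⁻¹ (a - φ a)`), and `L = K + K l₀`,
so multiplication `L ⊗_K A^φ → A` is an isomorphism (Galois descent). Centrality and simplicity
descend from `L ⊗_K A^φ ≅ A` to `A^φ`.
-/

open scoped TensorProduct

theorem span_one_pair_eq_top {K L : Type*} [Field K] [Field L] [Algebra K L]
    (hdim : Module.finrank K L = 2) {l₀ : L} (hl₀ : l₀ ∉ Set.range (algebraMap K L)) :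
    Submodule.span K {1, l₀} = ⊤ := by
  have hli : LinearIndependent K ![1, l₀] := by
    refine LinearIndependent.pair_iff.mpr fun s t hst => ?_
    obtain rfl : t = 0 := by
      by_contra ht
      refine hl₀ ⟨-(s / t), ?_⟩
      calc algebraMap K L (-(s / t)) = t⁻¹ • -(s • 1) := by
            rw [Algebra.algebraMap_eq_smul_one, smul_neg, smul_smul, neg_smul, div_eq_inv_mul]
        _ = l₀ := by
            rw [← eq_neg_of_add_eq_zero_right hst, smul_smul, inv_mul_cancel₀ ht, one_smul]
    simpa using hst
  simpa [Set.pair_comm] using hli.span_eq_top_of_card_eq_finrank (by simp [hdim])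

theorem TensorProduct.exists_one_tmul_add_tmul_eq {K L M : Type*} [Field K] [Field L]
    [Algebra K L] [AddCommGroup M] [Module K M] (hdim : Module.finrank K L = 2) {l₀ : L}
    (hl₀ : l₀ ∉ Set.range (algebraMap K L)) (t : L ⊗[K] M) :
    ∃ m₁ m₂ : M, 1 ⊗ₜ m₁ + l₀ ⊗ₜ m₂ = t := by
  induction t using TensorProduct.induction_on with
  | zero => exact ⟨0, 0, by simp⟩
  | tmul c m =>
    obtain ⟨k₁, k₂, rfl⟩ := Submodule.mem_span_pair.mp
      (span_one_pair_eq_top hdim hl₀ ▸ Submodule.mem_top : c ∈ Submodule.span K {1, l₀})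
    exact ⟨k₁ • m, k₂ • m, by
      simp only [TensorProduct.tmul_smul, TensorProduct.add_tmul, TensorProduct.smul_tmul']⟩
  | add t t' ht ht' =>
    obtain ⟨m₁, m₂, rfl⟩ := ht
    obtain ⟨m₁', m₂', rfl⟩ := ht'
    exact ⟨m₁ + m₁', m₂ + m₂', by simp only [TensorProduct.tmul_add]; abel⟩

-- `Algebra.IsCentral.of_algEquiv` requires both algebras to live in the same universe.
theorem Algebra.IsCentral.of_algEquiv' {K D D' : Type*} [CommSemiring K] [Semiring D]
    [Algebra K D] [Algebra.IsCentral K D] [Semiring D'] [Algebra K D'] (e : D ≃ₐ[K] D') :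
    Algebra.IsCentral K D' :=
  ⟨fun z hz => by
    obtain ⟨k, hk⟩ := (Algebra.IsCentral.mem_center_iff K).mp
      ((MulEquivClass.apply_mem_center_iff e.symm).mpr hz)
    exact ⟨k, e.symm.injective ((e.symm.commutes k).trans hk.symm)⟩⟩

theorem Algebra.IsCentral.of_baseChange (K L B : Type*) [Field K] [CommRing L] [Nontrivial L]
    [Ring B] [Algebra K L] [Algebra K B] [Algebra.IsCentral L (L ⊗[K] B)] :
    Algebra.IsCentral K B := by
  refine ⟨fun z hz => ?_⟩
  obtain ⟨c, hc⟩ : ∃ c : L, (1 : L) ⊗ₜ[K] z = c ⊗ₜ 1 := by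
    have : (1 : L) ⊗ₜ[K] z ∈ Subalgebra.center L (L ⊗[K] B) :=
      Subalgebra.mem_center_iff.mpr (Subalgebra.mem_center_iff.mp
        (Algebra.TensorProduct.includeRight_map_center_le K L B ⟨z, hz, rfl⟩))
    exact (Algebra.IsCentral.mem_center_iff L).mp this
  obtain ⟨f, hf⟩ := Module.Projective.exists_dual_ne_zero K (one_ne_zero (α := L))
  have := congrArg (TensorProduct.lid K B ∘ LinearMap.rTensor B f) hc
  simp only [Function.comp_apply, LinearMap.rTensor_tmul, TensorProduct.lid_tmul] at this
  refine Algebra.mem_bot.mpr ⟨(f 1)⁻¹ * f c, ?_⟩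
  rw [map_mul, ← Algebra.smul_def, Algebra.algebraMap_eq_smul_one, ← this, smul_smul,
    inv_mul_cancel₀ hf, one_smul]

theorem IsSimpleRing.right_of_tensor_of_field (K B C : Type*) [Field K] [Ring B] [Ring C]
    [Nontrivial B] [Algebra K B] [Algebra K C] [IsSimpleRing (B ⊗[K] C)] : IsSimpleRing C := by
  have : Nontrivial C :=
    (Algebra.TensorProduct.includeRight : C →ₐ[K] B ⊗[K] C).toRingHom.domain_nontrivial
  refine .of_eq_bot_or_eq_top fun I => or_iff_not_imp_right.mpr fun hI => ?_
  have : Nontrivial I.ringCon.Quotient :=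
    ⟨1, 0, fun h => hI ((TwoSidedIdeal.one_mem_iff I).mp ((RingCon.eq _).mp h))⟩
  -- The simple ring `B ⊗ C` embeds into the nonzero ring `B ⊗ (C ⧸ I)`, where `1 ⊗ I` vanishes.
  let q := Algebra.TensorProduct.map (AlgHom.id K B) (I.ringCon.mkₐ K)
  have hq : Function.Injective q := by
    rw [← TwoSidedIdeal.ker_eq_bot]
    refine (IsSimpleRing.simple.eq_bot_or_eq_top _).resolve_right fun h => ?_
    have : (1 : B ⊗[K] C) ∈ TwoSidedIdeal.ker q := h ▸ TwoSidedIdeal.mem_top _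
    exact one_ne_zero ((TwoSidedIdeal.mem_ker _).mp (by simpa using this))
  refine eq_bot_iff.mpr fun x hx => (TwoSidedIdeal.mem_bot C).mpr ?_
  have : q (1 ⊗ₜ x) = q 0 := by
    rw [Algebra.TensorProduct.map_tmul, RingCon.mkₐ_apply, (RingCon.eq _).mpr hx,
      RingCon.coe_zero, TensorProduct.tmul_zero, map_zero]
  rwa [hq.eq_iff, Module.FaithfullyFlat.one_tmul_eq_zero_iff] at this

def AlgEquiv.ofInvolutive {R A : Type*} [CommSemiring R] [Semiring A] [Algebra R A] (f : A → A)
    (hf : Function.Involutive f) (hadd : ∀ x y, f (x + y) = f x + f y)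
    (hmul : ∀ x y, f (x * y) = f x * f y) (halg : ∀ r, f (algebraMap R A r) = algebraMap R A r) :
    A ≃ₐ[R] A :=
  AlgEquiv.ofRingEquiv (f := { hf.toPerm f with map_mul' := hmul, map_add' := hadd }) halg

section Descent

variable {K L A : Type*} [Field K] [Field L] [Algebra K L] [Ring A] [Algebra L A] [Algebra K A]
  {σ : L ≃ₐ[K] L} {φ : A ≃ₐ[K] A}

def fixedSubalgebra (φ : A ≃ₐ[K] A) : Subalgebra K A :=
  AlgHom.equalizer φ (AlgHom.id K A)

theorem mem_fixedSubalgebra {x : A} : x ∈ fixedSubalgebra φ ↔ φ x = x := Iff.rfl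

theorem map_smul_of_map_algebraMap (hφ : ∀ l, φ (algebraMap L A l) = algebraMap L A (σ l))
    (l : L) (x : A) : φ (l • x) = σ l • φ x := by
  rw [Algebra.smul_def, map_mul, hφ, ← Algebra.smul_def]

theorem involutive_of_map_algebraMap [Nontrivial A]
    (hφ : ∀ l, φ (algebraMap L A l) = algebraMap L A (σ l)) (hφφ : Function.Involutive φ) :
    Function.Involutive σ := fun l =>
  (algebraMap L A).injective (by rw [← hφ, ← hφ, hφφ])

theorem eq_zero_of_add_smul_eq_zero (hφ : ∀ l, φ (algebraMap L A l) = algebraMap L A (σ l))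
    {l₀ : L} (hl₀ : σ l₀ ≠ l₀) {b₁ b₂ : A} (h₁ : b₁ ∈ fixedSubalgebra φ)
    (h₂ : b₂ ∈ fixedSubalgebra φ) (h : b₁ + l₀ • b₂ = 0) : b₁ = 0 ∧ b₂ = 0 := by
  have hσ : b₁ + σ l₀ • b₂ = 0 := by
    simpa only [map_add, map_smul_of_map_algebraMap hφ, mem_fixedSubalgebra.mp h₁,
      mem_fixedSubalgebra.mp h₂, map_zero] using congrArg φ h
  have hb₂ : (l₀ - σ l₀) • b₂ = 0 := by
    rw [sub_smul, ← add_sub_add_left_eq_sub _ _ b₁, h, hσ, sub_zero]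
  obtain rfl : b₂ = 0 := (smul_eq_zero.mp hb₂).resolve_left (sub_ne_zero.mpr hl₀.symm)
  simpa using h

theorem exists_add_smul_eq [Nontrivial A]
    (hφ : ∀ l, φ (algebraMap L A l) = algebraMap L A (σ l)) (hφφ : Function.Involutive φ)
    {l₀ : L} (hl₀ : σ l₀ ≠ l₀) (a : A) :
    ∃ b₁ ∈ fixedSubalgebra φ, ∃ b₂ ∈ fixedSubalgebra φ, b₁ + l₀ • b₂ = a := by
  have hd : l₀ - σ l₀ ≠ 0 := sub_ne_zero.mpr hl₀.symm
  have hσd : σ (l₀ - σ l₀)⁻¹ = -(l₀ - σ l₀)⁻¹ := by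
    rw [map_inv₀, map_sub, involutive_of_map_algebraMap hφ hφφ, ← inv_neg, neg_sub]
  obtain ⟨b₂, hb₂, hl₀b₂⟩ : ∃ b₂ : A, φ b₂ = b₂ ∧ (l₀ - σ l₀) • b₂ = a - φ a :=
    ⟨(l₀ - σ l₀)⁻¹ • (a - φ a),
      by rw [map_smul_of_map_algebraMap hφ, hσd, map_sub, hφφ, neg_smul, ← smul_neg, neg_sub],
      by rw [smul_smul, mul_inv_cancel₀ hd, one_smul]⟩
  refine ⟨a - l₀ • b₂, ?_, b₂, hb₂, sub_add_cancel a _⟩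
  rw [mem_fixedSubalgebra, map_sub, map_smul_of_map_algebraMap hφ, hb₂]
  linear_combination (norm := module) hl₀b₂

variable (L) in
def fixedSubalgebraBaseChange [IsScalarTower K L A] (φ : A ≃ₐ[K] A) :
    L ⊗[K] fixedSubalgebra φ →ₐ[L] A :=
  Algebra.TensorProduct.lift (Algebra.ofId L A) (fixedSubalgebra φ).val
    fun _ _ => Algebra.commutes _ _

theorem fixedSubalgebraBaseChange_tmul [IsScalarTower K L A] (l : L) (b : fixedSubalgebra φ) :
    fixedSubalgebraBaseChange L φ (l ⊗ₜ b) = l • (b : A) :=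
  (Algebra.TensorProduct.lift_tmul _ _ _ l b).trans (Algebra.smul_def l (b : A)).symm

theorem fixedSubalgebraBaseChange_bijective [IsScalarTower K L A] [Nontrivial A]
    (hφ : ∀ l, φ (algebraMap L A l) = algebraMap L A (σ l)) (hφφ : Function.Involutive φ)
    (hdim : Module.finrank K L = 2) {l₀ : L} (hl₀ : σ l₀ ≠ l₀) :
    Function.Bijective (fixedSubalgebraBaseChange L φ) := by
  refine ⟨(injective_iff_map_eq_zero _).mpr fun t ht => ?_, fun a => ?_⟩
  · have hl₀K : l₀ ∉ Set.range (algebraMap K L) := by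
      rintro ⟨k, rfl⟩
      exact hl₀ (σ.commutes k)
    obtain ⟨b₁, b₂, rfl⟩ := TensorProduct.exists_one_tmul_add_tmul_eq hdim hl₀K t
    rw [map_add, fixedSubalgebraBaseChange_tmul, fixedSubalgebraBaseChange_tmul, one_smul] at ht
    obtain ⟨h₁, h₂⟩ := eq_zero_of_add_smul_eq_zero hφ hl₀ b₁.2 b₂.2 ht
    rw [ZeroMemClass.coe_eq_zero.mp h₁, ZeroMemClass.coe_eq_zero.mp h₂, TensorProduct.tmul_zero,
      TensorProduct.tmul_zero, add_zero]
  · obtain ⟨b₁, h₁, b₂, h₂, rfl⟩ := exists_add_smul_eq hφ hφφ hl₀ a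
    exact ⟨1 ⊗ₜ ⟨b₁, h₁⟩ + l₀ ⊗ₜ ⟨b₂, h₂⟩, by
      rw [map_add, fixedSubalgebraBaseChange_tmul, fixedSubalgebraBaseChange_tmul, one_smul]⟩

end Descent

section CanonicalInvolution

variable {L A : Type*} [Field L] [Ring A] [Algebra L A] {conj : A → A}

theorem map_one_of_involutive_of_antimul {M : Type*} [Monoid M] {f : M → M}
    (hmul : ∀ x y, f (x * y) = f y * f x) (hf : Function.Involutive f) : f 1 = 1 :=
  calc f 1 = f 1 * f (f 1) := by rw [hf, mul_one]
    _ = 1 := by rw [← hmul, mul_one, hf]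

theorem conj_algebraMap (hconj_mul : ∀ x y, conj (x * y) = conj y * conj x)
    (hconj_smul : ∀ (l : L) x, conj (l • x) = l • conj x) (hconj_inv : Function.Involutive conj)
    (l : L) : conj (algebraMap L A l) = algebraMap L A l := by
  rw [Algebra.algebraMap_eq_smul_one, hconj_smul,
    map_one_of_involutive_of_antimul hconj_mul hconj_inv]

theorem eq_zero_of_smul_eq_algebraMap {x : A} (hx : x ∉ Set.range (algebraMap L A)) {c m : L}
    (h : c • x = algebraMap L A m) : c = 0 := by
  by_contra hc
  refine hx ⟨c⁻¹ * m, ?_⟩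
  rw [map_mul, ← h, ← Algebra.smul_def, smul_smul, inv_mul_cancel₀ hc, one_smul]

theorem commute_conj {σ : L → L} {τ : A → A}
    (hconj_mul : ∀ x y, conj (x * y) = conj y * conj x)
    (hconj_smul : ∀ (l : L) x, conj (l • x) = l • conj x) (hconj_inv : Function.Involutive conj)
    (htrd : ∀ x, ∃ t : L, x + conj x = algebraMap L A t)
    (hnrd : ∀ x, ∃ m : L, x * conj x = algebraMap L A m)
    (hτ_add : ∀ x y, τ (x + y) = τ x + τ y) (hτ_mul : ∀ x y, τ (x * y) = τ y * τ x)
    (hτ_inv : Function.Involutive τ) (hτ_alg : ∀ l, τ (algebraMap L A l) = algebraMap L A (σ l)) :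
    Function.Commute conj τ := by
  have hconj_alg := conj_algebraMap hconj_mul hconj_smul hconj_inv
  intro x
  by_cases hx : x ∈ Set.range (algebraMap L A)
  · obtain ⟨l, rfl⟩ := hx
    simp only [hτ_alg, hconj_alg]
  have hτx : τ x ∉ Set.range (algebraMap L A) := by
    rintro ⟨m, hm⟩
    exact hx ⟨σ m, by rw [← hτ_alg, hm, hτ_inv]⟩
  obtain ⟨t, ht⟩ := htrd x
  obtain ⟨m, hm⟩ := hnrd x
  obtain ⟨t', ht'⟩ := htrd (τ x)
  obtain ⟨m', hm'⟩ := hnrd (τ x)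
  have h₁ : τ (conj x) = algebraMap L A (σ t) - τ x := by
    rw [eq_sub_iff_add_eq', ← hτ_add, ht, hτ_alg]
  have h₂ : conj (τ x) = algebraMap L A t' - τ x := eq_sub_of_add_eq' ht'
  have h₃ : τ (conj x) * τ x = algebraMap L A (σ m) := by rw [← hτ_mul, hm, hτ_alg]
  have hσt : (σ t - t') • τ x = algebraMap L A (σ m - m') := by
    rw [map_sub, ← h₃, ← hm', h₁, h₂, sub_smul, Algebra.smul_def, Algebra.smul_def, sub_mul,
      mul_sub, Algebra.commutes t']
    abel
  rw [h₁, h₂, sub_eq_zero.mp (eq_zero_of_smul_eq_algebraMap hτx hσt)]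

end CanonicalInvolution

theorem stmt19_general (K L : Type*) [Field K] [Field L] [Algebra K L]
    (hdim : Module.finrank K L = 2)
    (σ : L ≃ₐ[K] L) (hσ : ∃ l, σ l ≠ l)
    (A : Type*) [Ring A] [Algebra L A] [Algebra K A] [IsScalarTower K L A]
    [Algebra.IsCentral L A] [IsSimpleRing A] (hA : Module.finrank L A = 4)
    (conj : A → A)
    (hconj_add : ∀ x y : A, conj (x + y) = conj x + conj y)
    (hconj_mul : ∀ x y : A, conj (x * y) = conj y * conj x)
    (hconj_smul : ∀ (l : L) (x : A), conj (l • x) = l • conj x)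
    (hconj_inv : ∀ x : A, conj (conj x) = x)
    (htrd : ∀ x : A, ∃ t : L, x + conj x = algebraMap L A t)
    (hnrd : ∀ x : A, ∃ m : L, x * conj x = algebraMap L A m)
    (τ : A → A)
    (hτ_add : ∀ x y : A, τ (x + y) = τ x + τ y)
    (hτ_mul : ∀ x y : A, τ (x * y) = τ y * τ x)
    (hτ_inv : ∀ x : A, τ (τ x) = x)
    (hτ_alg : ∀ l : L, τ (algebraMap L A l) = algebraMap L A (σ l)) :
    ∃ B : Subalgebra K A,
      (∀ x : A, x ∈ B ↔ τ (conj x) = x) ∧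
      Module.finrank K B = 4 ∧ Algebra.IsCentral K B ∧ IsSimpleRing B ∧
      Nonempty (L ⊗[K] B ≃ₐ[L] A) := by
  obtain ⟨l₀, hl₀⟩ := hσ
  have hcomm : Function.Commute conj τ :=
    commute_conj hconj_mul hconj_smul hconj_inv htrd hnrd hτ_add hτ_mul hτ_inv hτ_alg
  have hφ (l : L) : τ (conj (algebraMap L A l)) = algebraMap L A (σ l) := by
    rw [conj_algebraMap hconj_mul hconj_smul hconj_inv, hτ_alg]
  have hφφ : Function.Involutive fun x => τ (conj x) := fun x => by
    simp only [hcomm (conj x), hconj_inv, hτ_inv]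
  let φ : A ≃ₐ[K] A := AlgEquiv.ofInvolutive (fun x => τ (conj x)) hφφ
    (fun x y => by simp only [hconj_add, hτ_add]) (fun x y => by simp only [hconj_mul, hτ_mul])
    (fun k => by rw [IsScalarTower.algebraMap_apply K L A, hφ, AlgEquiv.commutes])
  let e := AlgEquiv.ofBijective _
    (fixedSubalgebraBaseChange_bijective (φ := φ) hφ hφφ hdim hl₀)
  refine ⟨fixedSubalgebra φ, fun x => mem_fixedSubalgebra, ?_, ?_, ?_, ⟨e⟩⟩
  · rw [← Module.finrank_baseChange (R := L), e.toLinearEquiv.finrank_eq, hA]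
  · have := Algebra.IsCentral.of_algEquiv' e.symm
    exact Algebra.IsCentral.of_baseChange K L _
  · have := IsSimpleRing.of_ringEquiv e.symm.toRingEquiv inferInstance
    exact IsSimpleRing.right_of_tensor_of_field K L _

/-- Let `L/K` be a separable quadratic extension, `A` a quaternion algebra over `L`
(a 4-dimensional central simple `L`-algebra) with canonical involution `conj`
(the symplectic involution of the first kind, with `a + ā` and `a·ā` in `L`), and `τ` an
involution of the second kind on `A`. Then the fixed points of `a ↦ τ(ā)` form a
quaternion algebra `B` over `K` (a 4-dimensional central simple `K`-subalgebra of `A`)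
with `B ⊗_K L ≅ A`. -/
theorem stmt19 (K L : Type*) [Field K] [Field L] [Algebra K L]
    [Algebra.IsSeparable K L] (hdim : Module.finrank K L = 2)
    (σ : L ≃ₐ[K] L) (hσ : ∃ l, σ l ≠ l)
    (A : Type*) [Ring A] [Algebra L A] [Algebra K A] [IsScalarTower K L A]
    [Algebra.IsCentral L A] [IsSimpleRing A] (hA : Module.finrank L A = 4)
    (conj : A → A)
    (hconj_add : ∀ x y : A, conj (x + y) = conj x + conj y)
    (hconj_mul : ∀ x y : A, conj (x * y) = conj y * conj x)
    (hconj_smul : ∀ (l : L) (x : A), conj (l • x) = l • conj x)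
    (hconj_inv : ∀ x : A, conj (conj x) = x)
    (htrd : ∀ x : A, ∃ t : L, x + conj x = algebraMap L A t)
    (hnrd : ∀ x : A, ∃ m : L, x * conj x = algebraMap L A m)
    (τ : A → A)
    (hτ_add : ∀ x y : A, τ (x + y) = τ x + τ y)
    (hτ_mul : ∀ x y : A, τ (x * y) = τ y * τ x)
    (hτ_inv : ∀ x : A, τ (τ x) = x)
    (hτ_smul : ∀ (l : L) (x : A), τ (l • x) = σ l • τ x)
    (hτ_alg : ∀ l : L, τ (algebraMap L A l) = algebraMap L A (σ l)) :
    ∃ B : Subalgebra K A,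
      (∀ x : A, x ∈ B ↔ τ (conj x) = x) ∧
      Module.finrank K B = 4 ∧ Algebra.IsCentral K B ∧ IsSimpleRing B ∧
      Nonempty (L ⊗[K] B ≃ₐ[L] A) :=
  stmt19_general K L hdim σ hσ A hA conj hconj_add hconj_mul hconj_smul hconj_inv htrd hnrd τ hτ_add
    hτ_mul hτ_inv hτ_alg
end
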